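/- arXiv:2404.06379 — 7 statements merged into one kernel-verified Lean document; each statement's English description precedes it below -/
import Mathlib

section
/- Let n ≥ 3 and let w be an element of the affine symmetric group 𝑆̃_n. Then no reduced word for w contains three consecutive letters i (i±1) i for some i ∈ {1,…,n−1} (letter indices read modulo n) if and only if in every reduced word for w, for every i ∈ {1,…,n−1}, any two occurrences of the letter i are separated by at least one occurrence of the letter i−1 and at least one occurrence of the letter i+1, where the letter n is identified with the letter 0. -/
/-!
The words are evaluated through explicit generators `affSwap n a` (`a : ZMod n`), which satisfy
the Coxeter relations: `sₐ² = 1`, `sₐ` commutes with `s_b` unless `b ∈ {a - 1, a, a + 1}`, and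
the braid relation holds for `b = a + 1` once `n ≥ 3`.

Assume no reduced word of `w` has a factor `i (i±1) i`, and take two occurrences of `a` in a
reduced word. We show, by strong induction on the length of the gap between them, that for each
`ε = ±1` the gap contains a letter `≡ a + ε`. If the gap contains a letter `≡ a`, use the shorter
gap up to it. Otherwise, if no letter is `≡ a + ε`, every letter of the gap commutes with `sₐ`
except those `≡ a - ε`. With none of these, the two `sₐ` cancel and the word was not reduced.
With exactly one, `b`, the two `a`s slide next to it and give reduced words containing `a b a`
and `b a b`, one of which is a forbidden factor (`a` and `b` are not both `0`). With two of them,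
the induction hypothesis for that pair puts a letter `≡ (a - ε) + ε = a` in the gap.

Conversely, in a factor `i j i` only `j` separates the two `i`s, and `j` cannot be both `i - 1`
and `(i + 1) mod n` when `n ≥ 3`.
-/

namespace Stmt8

/-- `w` is an element of the affine symmetric group `𝑆̃_n`: a bijection of `ℤ`
with `w(i + n) = w(i) + n` for all `i` and `∑_{i=1}^n (w(i) - i) = 0`. -/
def IsAffinePerm (n : ℕ) (w : Equiv.Perm ℤ) : Prop :=
  (∀ i : ℤ, w (i + (n : ℤ)) = w i + (n : ℤ)) ∧
    ∑ i ∈ Finset.Icc (1 : ℤ) (n : ℤ), (w i - i) = 0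

/-- `σ` is the Coxeter generator `sᵢ` of `𝑆̃_n`: it swaps `j` and `j + 1` for
every integer `j ≡ i (mod n)` and fixes all other integers. -/
def IsGenA (n : ℕ) (i : ℕ) (σ : Equiv.Perm ℤ) : Prop :=
  ∀ j : ℤ, (j ≡ (i : ℤ) [ZMOD (n : ℤ)] → σ j = j + 1 ∧ σ (j + 1) = j) ∧
    ((¬ j ≡ (i : ℤ) [ZMOD (n : ℤ)] ∧ ¬ j ≡ (i : ℤ) + 1 [ZMOD (n : ℤ)]) → σ j = j)

/-- `l` is a word for `w` in the letters `{0, …, n-1}`: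
`w = s_{i₁} ⋯ s_{i_ℓ}` where `l = [i₁, …, i_ℓ]`. -/
def IsWordA (n : ℕ) (w : Equiv.Perm ℤ) (l : List ℕ) : Prop :=
  (∀ i ∈ l, i < n) ∧
    ∃ σs : List (Equiv.Perm ℤ), List.Forall₂ (IsGenA n) l σs ∧ σs.prod = w

/-- The Coxeter length of `w`: the minimal length of a word for `w`. -/
noncomputable def lenA (n : ℕ) (w : Equiv.Perm ℤ) : ℕ :=
  sInf {m | ∃ l : List ℕ, IsWordA n w l ∧ l.length = m}

/-- The disarray `dis(w) = ∑_{i=1}^n |w(i) - i|`. -/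
noncomputable def disA (n : ℕ) (w : Equiv.Perm ℤ) : ℤ :=
  ∑ i ∈ Finset.Icc (1 : ℤ) (n : ℤ), |w i - i|

/-- `l` is a reduced word for `w`. -/
def IsReducedWordA (n : ℕ) (w : Equiv.Perm ℤ) (l : List ℕ) : Prop :=
  IsWordA n w l ∧ l.length = lenA n w

/-- `l` contains three consecutive letters of the form `i (i±1) i` for some
`i ∈ {1, …, n-1}`, where letter indices are read modulo `n`. -/
def HasBadFactorA (n : ℕ) (l : List ℕ) : Prop :=
  ∃ i j : ℕ, 1 ≤ i ∧ i + 1 ≤ n ∧ (j = (i + 1) % n ∨ i = j + 1) ∧ [i, j, i] <:+: l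

/-- In `l`, for every `i ∈ {1, …, n-1}`, any two occurrences of the letter `i`
are separated by at least one occurrence of the letter `i-1` and at least one
occurrence of the letter `i+1`, where the letter `n` is identified with the
letter `0` (i.e. the second separating letter is `(i+1) mod n`). -/
def SeparatedOccurrencesA (n : ℕ) (l : List ℕ) : Prop :=
  ∀ i : ℕ, 1 ≤ i → i + 1 ≤ n →
    ∀ p q : Fin l.length, p < q → l.get p = i → l.get q = i →
      (∃ r : Fin l.length, p < r ∧ r < q ∧ l.get r + 1 = i) ∧
      (∃ r : Fin l.length, p < r ∧ r < q ∧ l.get r = (i + 1) % n)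

theorem List.forall_not_or_exists_first {α : Type*} (p : α → Prop) (l : List α) :
    (∀ x ∈ l, ¬ p x) ∨ ∃ l₁ x l₂, l = l₁ ++ x :: l₂ ∧ p x ∧ ∀ y ∈ l₁, ¬ p y := by
  induction l with
  | nil => simp
  | cons a l ih =>
    by_cases ha : p a
    · exact .inr ⟨[], a, l, rfl, ha, by simp⟩
    · rcases ih with h | ⟨l₁, x, l₂, rfl, hx, h₁⟩
      · exact .inl (by simpa [ha] using h)
      · exact .inr ⟨a :: l₁, x, l₂, rfl, hx, by simpa [ha] using h₁⟩

theorem List.exists_eq_append_cons_append_cons {α : Type*} {l : List α} {p q : Fin l.length}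
    (hpq : p < q) :
    ∃ u v t, l = u ++ l.get p :: v ++ l.get q :: t ∧
      ∀ x ∈ v, ∃ r : Fin l.length, p < r ∧ r < q ∧ l.get r = x := by
  have hq : (q : ℕ) = p + 1 + (q - p - 1) := by omega
  refine ⟨l.take p, (l.drop (p + 1)).take (q - p - 1), l.drop (q + 1), ?_, ?_⟩
  · conv_lhs =>
      rw [← List.take_append_drop p l, List.drop_eq_getElem_cons p.isLt,
        ← List.take_append_drop (q - p - 1) (l.drop (p + 1)), List.drop_drop, ← hq,
        List.drop_eq_getElem_cons q.isLt]
    simp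
  · intro x hx
    obtain ⟨k, hk, rfl⟩ := List.mem_iff_getElem.1 hx
    simp only [List.length_take, List.length_drop] at hk
    refine ⟨⟨p + 1 + k, by omega⟩, ?_, ?_, ?_⟩
    · simp only [Fin.lt_def]; omega
    · simp only [Fin.lt_def]; omega
    · simp

section NatCast

variable {n : ℕ}

theorem natCast_ne_zero_of_lt {k : ℕ} (hk : 0 < k) (hkn : k < n) : (k : ZMod n) ≠ 0 := by
  rw [Ne, ZMod.natCast_eq_zero_iff]
  exact Nat.not_dvd_of_pos_of_lt hk hkn

theorem eq_mod_of_natCast_eq {x y : ℕ} (hx : x < n) (h : (x : ZMod n) = y) : x = y % n := by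
  rwa [ZMod.natCast_eq_natCast_iff', Nat.mod_eq_of_lt hx] at h

theorem eq_add_one_of_natCast_eq {x y : ℕ} (hx : x < n) (hy : y < n) (hx₀ : x ≠ 0)
    (h : (x : ZMod n) = y + 1) : x = y + 1 := by
  have h' := eq_mod_of_natCast_eq hx (y := y + 1) (by push_cast; exact h)
  rcases (show y + 1 ≤ n from hy).lt_or_eq with hlt | heq
  · rwa [Nat.mod_eq_of_lt hlt] at h'
  · rw [heq, Nat.mod_self] at h'
    exact absurd h' hx₀

end NatCast

section Generators

variable {n : ℕ}

/-- `invFun` is spelled out so that this is a permutation even for `n = 1`, where `toFun` is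
`j ↦ j + 1`; for `n ≠ 1` the two agree. -/
def affSwap (n : ℕ) (a : ZMod n) : Equiv.Perm ℤ where
  toFun j := if (j : ZMod n) = a then j + 1 else if (j : ZMod n) = a + 1 then j - 1 else j
  invFun j := if (j : ZMod n) = a + 1 then j - 1 else if (j : ZMod n) = a then j + 1 else j
  left_inv j := by
    dsimp only
    split_ifs <;> simp_all
  right_inv j := by
    dsimp only
    split_ifs <;> simp_all

theorem affSwap_apply (a : ZMod n) (j : ℤ) :
    affSwap n a j =
      if (j : ZMod n) = a then j + 1 else if (j : ZMod n) = a + 1 then j - 1 else j :=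
  rfl

theorem affSwap_apply_of_ne {a : ZMod n} {j : ℤ} (h₀ : (j : ZMod n) ≠ a)
    (h₁ : (j : ZMod n) ≠ a + 1) : affSwap n a j = j := by
  simp [affSwap_apply, h₀, h₁]

theorem affSwap_mul_self (h1 : (1 : ZMod n) ≠ 0) (a : ZMod n) :
    affSwap n a * affSwap n a = 1 := by
  ext j
  simp only [Equiv.Perm.mul_apply, affSwap_apply, Equiv.Perm.one_apply]
  split_ifs <;> simp_all

theorem affSwap_disjoint {a b : ZMod n} (h₀ : b ≠ a) (h₁ : b ≠ a + 1) (h₂ : b ≠ a - 1) :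
    (affSwap n a).Disjoint (affSwap n b) := by
  intro j
  by_cases ha : (j : ZMod n) = a ∨ (j : ZMod n) = a + 1
  · right
    rcases ha with ha | ha <;> apply affSwap_apply_of_ne <;> rw [ha]
    exacts [h₀.symm, fun h => h₂ (eq_sub_of_add_eq h.symm), h₁.symm,
      fun h => h₀ (add_right_cancel h).symm]
  · push Not at ha
    exact .inl (affSwap_apply_of_ne ha.1 ha.2)

theorem affSwap_commute_of_ne {a b ε : ZMod n} (hε : ε = 1 ∨ ε = -1) (h₀ : b ≠ a)
    (h₁ : b ≠ a + ε) (h₂ : b ≠ a - ε) : Commute (affSwap n a) (affSwap n b) := by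
  rcases hε with rfl | rfl
  · exact (affSwap_disjoint h₀ h₁ h₂).commute
  · rw [sub_neg_eq_add] at h₂
    rw [← sub_eq_add_neg] at h₁
    exact (affSwap_disjoint h₀ h₂ h₁).commute

theorem affSwap_braid (h1 : (1 : ZMod n) ≠ 0) (h2 : (2 : ZMod n) ≠ 0) (a : ZMod n) :
    affSwap n a * affSwap n (a + 1) * affSwap n a =
      affSwap n (a + 1) * affSwap n a * affSwap n (a + 1) := by
  have h2' : (1 : ZMod n) + 1 ≠ 0 := by rwa [one_add_one_eq_two]
  ext j
  simp only [Equiv.Perm.mul_apply, affSwap_apply]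
  push_cast
  generalize (j : ZMod n) = x
  by_cases hxa : x = a
  · subst hxa
    simp [h1, h2', add_assoc]
  by_cases hxa1 : x = a + 1
  · subst hxa1
    simp [h1, h2', add_assoc]
  by_cases hxa2 : x = a + 1 + 1
  · subst hxa2
    simp [h1, h2', add_assoc, add_sub_assoc]
  · simp [hxa, hxa1, hxa2]

theorem isGenA_iff (h1 : (1 : ZMod n) ≠ 0) {i : ℕ} {σ : Equiv.Perm ℤ} :
    IsGenA n i σ ↔ affSwap n i = σ := by
  simp only [IsGenA, ← ZMod.intCast_eq_intCast_iff]
  push_cast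
  constructor
  · intro h
    ext j
    rw [affSwap_apply]
    split_ifs with hi hi1
    · exact ((h j).1 hi).1.symm
    · simpa using ((h (j - 1)).1 (by push_cast; rw [hi1]; ring)).2.symm
    · exact ((h j).2 ⟨hi, hi1⟩).symm
  · rintro rfl j
    refine ⟨fun hj => ⟨?_, ?_⟩, fun hj => affSwap_apply_of_ne hj.1 hj.2⟩ <;>
      simp [affSwap_apply, hj, h1]

theorem forall₂_isGenA_iff (h1 : (1 : ZMod n) ≠ 0) {l : List ℕ} {σs : List (Equiv.Perm ℤ)} :
    List.Forall₂ (IsGenA n) l σs ↔ l.map (fun i : ℕ => affSwap n i) = σs := by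
  constructor
  · intro h
    induction h with
    | nil => rfl
    | cons h _ ih => rw [List.map_cons, (isGenA_iff h1).1 h, ih]
  · rintro rfl
    induction l with
    | nil => exact .nil
    | cons i l ih => exact .cons ((isGenA_iff h1).2 rfl) ih

end Generators

section Words

variable {n : ℕ} {w : Equiv.Perm ℤ}

def wordProd (n : ℕ) (l : List ℕ) : Equiv.Perm ℤ :=
  (l.map fun i : ℕ => affSwap n i).prod

@[simp]
theorem wordProd_nil : wordProd n [] = 1 :=
  rfl

@[simp]
theorem wordProd_cons (a : ℕ) (l : List ℕ) :
    wordProd n (a :: l) = affSwap n a * wordProd n l :=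
  List.prod_cons

@[simp]
theorem wordProd_append (l₁ l₂ : List ℕ) :
    wordProd n (l₁ ++ l₂) = wordProd n l₁ * wordProd n l₂ := by
  simp [wordProd]

theorem isWordA_iff (h1 : (1 : ZMod n) ≠ 0) {l : List ℕ} :
    IsWordA n w l ↔ (∀ i ∈ l, i < n) ∧ wordProd n l = w := by
  simp only [IsWordA, forall₂_isGenA_iff h1, exists_eq_left', wordProd]

theorem commute_wordProd {a : ℕ} {v : List ℕ}
    (hv : ∀ x ∈ v, Commute (affSwap n a) (affSwap n x)) :
    Commute (affSwap n a) (wordProd n v) :=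
  Commute.list_prod_right _ _ (by simpa [wordProd] using hv)

theorem wordProd_cancel (h1 : (1 : ZMod n) ≠ 0) {a a' : ℕ} (ha : (a : ZMod n) = a')
    {v : List ℕ} (hv : ∀ x ∈ v, Commute (affSwap n a) (affSwap n x)) :
    wordProd n (a :: v ++ [a']) = wordProd n v := by
  simp only [wordProd_append, wordProd_cons, wordProd_nil, mul_one, ← ha]
  rw [(commute_wordProd hv).eq, mul_assoc, affSwap_mul_self h1, mul_one]

theorem wordProd_slide {a a' b : ℕ} (ha : (a : ZMod n) = a') {v₁ v₂ : List ℕ}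
    (hv₁ : ∀ x ∈ v₁, Commute (affSwap n a) (affSwap n x))
    (hv₂ : ∀ x ∈ v₂, Commute (affSwap n a) (affSwap n x)) :
    wordProd n (a :: v₁ ++ b :: v₂ ++ [a']) = wordProd n (v₁ ++ [a, b, a] ++ v₂) := by
  simp only [wordProd_append, wordProd_cons, wordProd_nil, mul_one, ← ha, mul_assoc]
  rw [(commute_wordProd hv₁).left_comm, ← (commute_wordProd hv₂).eq]

theorem wordProd_braid (h1 : (1 : ZMod n) ≠ 0) (h2 : (2 : ZMod n) ≠ 0) {a b : ℕ}
    (hab : (b : ZMod n) = a + 1 ∨ (a : ZMod n) = b + 1) :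
    wordProd n [a, b, a] = wordProd n [b, a, b] := by
  rcases hab with hab | hab <;> simp only [wordProd_cons, wordProd_nil, mul_one, hab, ← mul_assoc]
  exacts [affSwap_braid h1 h2 _, (affSwap_braid h1 h2 _).symm]

theorem IsReducedWordA.length_le {l l' : List ℕ} (hl : IsReducedWordA n w l)
    (h : IsWordA n w l') : l.length ≤ l'.length :=
  hl.2 ▸ Nat.sInf_le ⟨l', h, rfl⟩

theorem IsWordA.replace (h1 : (1 : ZMod n) ≠ 0) {u x y t : List ℕ}
    (hl : IsWordA n w (u ++ x ++ t)) (hyx : y ⊆ x) (hprod : wordProd n x = wordProd n y) :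
    IsWordA n w (u ++ y ++ t) := by
  rw [isWordA_iff h1] at hl ⊢
  refine ⟨fun i hi => hl.1 i ?_, by simpa [hprod] using hl.2⟩
  simp only [List.mem_append] at hi ⊢
  exact hi.imp_left (Or.imp_right (@hyx i))

theorem IsReducedWordA.replace (h1 : (1 : ZMod n) ≠ 0) {u x y t : List ℕ}
    (hl : IsReducedWordA n w (u ++ x ++ t)) (hyx : y ⊆ x) (hprod : wordProd n x = wordProd n y)
    (hlen : y.length = x.length) : IsReducedWordA n w (u ++ y ++ t) :=
  ⟨hl.1.replace h1 hyx hprod, by simpa [hlen] using hl.2⟩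

end Words

section Argument

variable {n : ℕ} {w : Equiv.Perm ℤ}

theorem not_isReducedWordA_of_commute (h1 : (1 : ZMod n) ≠ 0) {u v t : List ℕ} {a a' : ℕ}
    (ha : (a : ZMod n) = a') (hv : ∀ x ∈ v, Commute (affSwap n a) (affSwap n x)) :
    ¬ IsReducedWordA n w (u ++ a :: v ++ a' :: t) := by
  intro hl
  replace hl : IsReducedWordA n w (u ++ (a :: v ++ [a']) ++ t) := by simpa using hl
  have := hl.length_le (hl.1.replace h1 (fun x hx => by simp [hx]) (wordProd_cancel h1 ha hv))
  simp at this

theorem hasBadFactorA_of_infix {l : List ℕ} {x y : ℕ} (hx : x < n) (hy : y < n) (hx₀ : x ≠ 0)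
    (hxy : (y : ZMod n) = x + 1 ∨ (x : ZMod n) = y + 1) (h : [x, y, x] <:+: l) :
    HasBadFactorA n l :=
  ⟨x, y, Nat.one_le_iff_ne_zero.2 hx₀, hx,
    hxy.imp (fun h => eq_mod_of_natCast_eq hy (by push_cast; exact h))
      (eq_add_one_of_natCast_eq hx hy hx₀), h⟩

theorem exists_hasBadFactorA_of_braid (hn : 2 < n) {u v₁ v₂ t : List ℕ} {a a' b : ℕ}
    (hl : IsReducedWordA n w (u ++ a :: v₁ ++ b :: v₂ ++ a' :: t)) (ha : (a : ZMod n) = a')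
    (hv₁ : ∀ x ∈ v₁, Commute (affSwap n a) (affSwap n x))
    (hv₂ : ∀ x ∈ v₂, Commute (affSwap n a) (affSwap n x))
    (hab : (b : ZMod n) = a + 1 ∨ (a : ZMod n) = b + 1) :
    ∃ l, IsReducedWordA n w l ∧ HasBadFactorA n l := by
  have h1 : (1 : ZMod n) ≠ 0 := by exact_mod_cast natCast_ne_zero_of_lt one_pos (by omega)
  have h2 : (2 : ZMod n) ≠ 0 := by exact_mod_cast natCast_ne_zero_of_lt two_pos hn
  have han : a < n := hl.1.1 a (by simp)
  have hbn : b < n := hl.1.1 b (by simp)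
  have haba : IsReducedWordA n w ((u ++ v₁) ++ [a, b, a] ++ (v₂ ++ t)) := by
    have := IsReducedWordA.replace h1 (u := u) (t := t) (by simpa using hl)
      (fun x hx => by
        simp only [List.mem_append, List.mem_cons, List.not_mem_nil, or_false] at hx ⊢
        tauto)
      (wordProd_slide ha hv₁ hv₂) (by simp only [List.length_append, List.length_cons]; omega)
    simpa using this
  have hbab : IsReducedWordA n w ((u ++ v₁) ++ [b, a, b] ++ (v₂ ++ t)) :=
    haba.replace h1
      (fun x hx => by simp only [List.mem_cons, List.not_mem_nil, or_false] at hx ⊢; tauto)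
      (wordProd_braid h1 h2 hab) rfl
  by_cases ha₀ : a = 0
  · refine ⟨_, hbab, hasBadFactorA_of_infix hbn han ?_ hab.symm ⟨_, _, rfl⟩⟩
    rintro rfl
    subst ha₀
    simp_all
  · exact ⟨_, haba, hasBadFactorA_of_infix han hbn ha₀ hab ⟨_, _, rfl⟩⟩

-- The two end letters need only agree modulo `n`, so that the recursion can restart from any
-- pair of letters of the same class.
theorem exists_mem_natCast_eq_add (hn : 2 < n)
    (hfree : ∀ l, IsReducedWordA n w l → ¬ HasBadFactorA n l)
    {u v t : List ℕ} {a a' : ℕ} (hl : IsReducedWordA n w (u ++ a :: v ++ a' :: t))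
    (ha : (a : ZMod n) = a') {ε : ZMod n} (hε : ε = 1 ∨ ε = -1) :
    ∃ x ∈ v, (x : ZMod n) = a + ε := by
  by_cases hmid : ∃ x ∈ v, (x : ZMod n) = a
  · obtain ⟨x, hx, hxa⟩ := hmid
    obtain ⟨v₁, v₂, rfl⟩ := List.append_of_mem hx
    obtain ⟨y, hy, hya⟩ := exists_mem_natCast_eq_add hn hfree (u := u) (v := v₁)
      (t := v₂ ++ a' :: t) (by simpa using hl) hxa.symm hε
    exact ⟨y, by simp [hy], hya⟩
  push Not at hmid
  by_contra! hnone
  have h1 : (1 : ZMod n) ≠ 0 := by exact_mod_cast natCast_ne_zero_of_lt one_pos (by omega)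
  have hcomm : ∀ x ∈ v, (x : ZMod n) ≠ a - ε → Commute (affSwap n a) (affSwap n x) :=
    fun x hx hx' => affSwap_commute_of_ne hε (hmid x hx) (hnone x hx) hx'
  rcases List.forall_not_or_exists_first (fun x : ℕ => (x : ZMod n) = a - ε) v with
    hv | ⟨v₁, b, r, rfl, hb, hv₁⟩
  · exact not_isReducedWordA_of_commute h1 ha (fun x hx => hcomm x hx (hv x hx)) hl
  rcases List.forall_not_or_exists_first (fun x : ℕ => (x : ZMod n) = a - ε) r with
    hr | ⟨v₂, b', v₃, rfl, hb', -⟩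
  · have hab : (b : ZMod n) = a + 1 ∨ (a : ZMod n) = b + 1 := by
      rcases hε with rfl | rfl
      · right; rw [hb]; ring
      · left; rw [hb]; ring
    obtain ⟨l, hl', hbad⟩ := exists_hasBadFactorA_of_braid hn (u := u) (v₁ := v₁) (v₂ := r)
      (t := t) (by simpa using hl) ha (fun x hx => hcomm x (by simp [hx]) (hv₁ x hx))
      (fun x hx => hcomm x (by simp [hx]) (hr x hx)) hab
    exact hfree l hl' hbad
  · obtain ⟨y, hy, hyb⟩ := exists_mem_natCast_eq_add hn hfree (u := u ++ a :: v₁) (v := v₂)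
      (t := v₃ ++ a' :: t) (by simpa using hl) (hb.trans hb'.symm) hε
    exact hmid y (by simp [hy]) (by rw [hyb, hb]; ring)
termination_by v.length
decreasing_by all_goals subst_vars; simp only [List.length_append, List.length_cons]; omega

theorem separatedOccurrencesA_of_forall_not_hasBadFactorA (hn : 2 < n)
    (hfree : ∀ l, IsReducedWordA n w l → ¬ HasBadFactorA n l) {l : List ℕ}
    (hl : IsReducedWordA n w l) : SeparatedOccurrencesA n l := by
  intro i hi₁ hin p q hpq hp hq
  obtain ⟨u, v, t, hdecomp, hv⟩ := List.exists_eq_append_cons_append_cons hpq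
  rw [hp, hq] at hdecomp
  have hlt : ∀ x ∈ v, x < n := fun x hx => hl.1.1 x (by rw [hdecomp]; simp [hx])
  obtain ⟨x, hx, hxi⟩ := exists_mem_natCast_eq_add hn hfree (hdecomp ▸ hl) rfl (.inr rfl)
  obtain ⟨y, hy, hyi⟩ := exists_mem_natCast_eq_add hn hfree (hdecomp ▸ hl) rfl (.inl rfl)
  obtain ⟨r, hpr, hrq, rfl⟩ := hv x hx
  obtain ⟨r', hpr', hrq', rfl⟩ := hv y hy
  refine ⟨⟨r, hpr, hrq, ?_⟩, ⟨r', hpr', hrq', ?_⟩⟩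
  · exact (eq_add_one_of_natCast_eq (by omega) (hlt _ hx) (by omega) (by rw [hxi]; ring)).symm
  · exact eq_mod_of_natCast_eq (hlt _ hy) (by push_cast; exact hyi)

theorem not_separatedOccurrencesA_of_infix (hn : 2 < n) {l : List ℕ} {i j : ℕ} (hi₁ : 1 ≤ i)
    (hin : i + 1 ≤ n) (h : [i, j, i] <:+: l) : ¬ SeparatedOccurrencesA n l := by
  obtain ⟨u, t, rfl⟩ := h
  intro hsep
  obtain ⟨⟨r, hpr, hrq, hr⟩, ⟨r', hpr', hrq', hr'⟩⟩ :=
    hsep i hi₁ hin ⟨u.length, by simp⟩ ⟨u.length + 2, by simp⟩ (by simp [Fin.lt_def])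
      (by simp) (by simp)
  have hget : ∀ s : Fin (u ++ [i, j, i] ++ t).length,
      u.length < (s : ℕ) → (s : ℕ) < u.length + 2 → (u ++ [i, j, i] ++ t).get s = j := by
    intro s h₁ h₂
    obtain rfl : s = ⟨u.length + 1, by simp⟩ := Fin.ext (show (s : ℕ) = u.length + 1 by omega)
    simp
  rw [hget r hpr hrq] at hr
  rw [hget r' hpr' hrq'] at hr'
  subst hr
  rcases (show j + 2 ≤ n by omega).lt_or_eq with hlt | heq
  · rw [Nat.mod_eq_of_lt hlt] at hr'; omega
  · rw [heq, Nat.mod_self] at hr'; omega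

end Argument

theorem stmt_8_general (n : ℕ) (hn : 3 ≤ n) (w : Equiv.Perm ℤ) :
    (∀ l : List ℕ, IsReducedWordA n w l → ¬ HasBadFactorA n l) ↔
      ∀ l : List ℕ, IsReducedWordA n w l → SeparatedOccurrencesA n l := by
  refine ⟨fun hfree l hl => separatedOccurrencesA_of_forall_not_hasBadFactorA hn hfree hl, ?_⟩
  rintro hsep l hl ⟨i, j, hi₁, hin, -, hij⟩
  exact not_separatedOccurrencesA_of_infix hn hi₁ hin hij (hsep l hl)

theorem stmt_8 (n : ℕ) (hn : 3 ≤ n) (w : Equiv.Perm ℤ) (hw : IsAffinePerm n w) :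
    (∀ l : List ℕ, IsReducedWordA n w l → ¬ HasBadFactorA n l) ↔
      ∀ l : List ℕ, IsReducedWordA n w l → SeparatedOccurrencesA n l :=
  stmt_8_general n hn w

end Stmt8
end

section
/- Let n ≥ 2 and let w be an element of the affine signed permutation group 𝑆̃^C_n. Then dis(w)/2 = ℓ(w) if and only if w globally avoids the pattern 321, i.e., there are no unfrozen integers i < j < k with w(i) > w(j) > w(k). -/
namespace Stmt9

/-- `w` is an element of the affine signed permutation group `𝑆̃^C_n`:
a bijection of `ℤ` with `w(-i) = -w(i)` and `w(2(n+1) - i) = 2(n+1) - w(i)`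
for all `i ∈ ℤ`. -/
def IsAffineSignedPerm (n : ℕ) (w : Equiv.Perm ℤ) : Prop :=
  (∀ i : ℤ, w (-i) = -(w i)) ∧
    ∀ i : ℤ, w (2 * ((n : ℤ) + 1) - i) = 2 * ((n : ℤ) + 1) - w i

/-- `σ` is the Coxeter generator `sᵢ` of `𝑆̃^C_n`: the unique element of the
group determined on the window `{1, …, n}` by: for `1 ≤ i ≤ n-1`, `sᵢ`
interchanges `i` and `i+1` and fixes every other element of the window;
`s₀` sends `1` to `-1` and fixes `{2, …, n}`; `s_n` sends `n` to `n+2` and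
fixes `{1, …, n-1}`. -/
def IsGenC (n : ℕ) (i : ℕ) (σ : Equiv.Perm ℤ) : Prop :=
  IsAffineSignedPerm n σ ∧
    if i = 0 then
      σ 1 = -1 ∧ ∀ j : ℤ, 2 ≤ j → j ≤ (n : ℤ) → σ j = j
    else if i = n then
      σ (n : ℤ) = (n : ℤ) + 2 ∧ ∀ j : ℤ, 1 ≤ j → j ≤ (n : ℤ) - 1 → σ j = j
    else
      i < n ∧ σ (i : ℤ) = (i : ℤ) + 1 ∧ σ ((i : ℤ) + 1) = (i : ℤ) ∧
        ∀ j : ℤ, 1 ≤ j → j ≤ (n : ℤ) → j ≠ (i : ℤ) → j ≠ (i : ℤ) + 1 → σ j = j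

/-- `l` is a word for `w` in the letters `{0, …, n}`:
`w = s_{i₁} ⋯ s_{i_ℓ}` where `l = [i₁, …, i_ℓ]`. -/
def IsWordC (n : ℕ) (w : Equiv.Perm ℤ) (l : List ℕ) : Prop :=
  (∀ i ∈ l, i ≤ n) ∧
    ∃ σs : List (Equiv.Perm ℤ), List.Forall₂ (IsGenC n) l σs ∧ σs.prod = w

/-- The Coxeter length of `w`: the minimal length of a word for `w`. -/
noncomputable def lenC (n : ℕ) (w : Equiv.Perm ℤ) : ℕ :=
  sInf {m | ∃ l : List ℕ, IsWordC n w l ∧ l.length = m}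

/-- The disarray `dis(w) = ∑_{i=1}^n |w(i) - i|`. -/
noncomputable def disC (n : ℕ) (w : Equiv.Perm ℤ) : ℤ :=
  ∑ i ∈ Finset.Icc (1 : ℤ) (n : ℤ), |w i - i|

/-- The unfrozen integers for `𝑆̃^C_n` are those that are not multiples of `n + 1`. -/
def UnfrozenC (n : ℕ) (i : ℤ) : Prop := ¬ ((n : ℤ) + 1 ∣ i)

/-- `w` globally contains the pattern `321`: there are unfrozen integers
`i < j < k` with `w(i) > w(j) > w(k)`. -/
def GloballyContains321C (n : ℕ) (w : Equiv.Perm ℤ) : Prop :=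
  ∃ i j k : ℤ, UnfrozenC n i ∧ UnfrozenC n j ∧ UnfrozenC n k ∧
    i < j ∧ j < k ∧ w i > w j ∧ w j > w k

/-!
Right multiplication by the generator `s_t` exchanges the values of `w` on the pair
`genLeft t < genRight n t` (and on its translates by `2(n+1)` and their negatives), so it
changes the disarray by `-2`, `0` or `2`, and by `-2` exactly when
`genRight n t ≤ w (genLeft t)` and `w (genRight n t) ≤ genLeft t`. Hence `dis w ≤ 2 ℓ(w)`.

The pattern arguments rest on a counting fact: an odd bijection of `ℤ` with bounded
displacement sends as many points across any cut upward as downward. So a descent `i < j` of a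
321-avoiding element must have `i < w i` and `w j < j`, otherwise the balancing inversion
completes a 321 pattern. For `w ≠ 1` avoiding 321 this yields a generator lowering `dis` by 2,
and the product still avoids 321: induction gives a word of length `dis w / 2`. Conversely a 321
pattern survives every step lowering `dis`; as `1` avoids 321, some letter of any word for `w`
fails to raise `dis`, and `dis w < 2 ℓ(w)`.
-/

def affineSignedPermGroup (n : ℕ) : Subgroup (Equiv.Perm ℤ) where
  carrier := {w | IsAffineSignedPerm n w}
  mul_mem' {w v} hw hv :=
    ⟨fun i => by simp [hv.1 i, hw.1 (v i)], fun i => by simp [hv.2 i, hw.2 (v i)]⟩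
  one_mem' := ⟨fun _ => rfl, fun _ => rfl⟩
  inv_mem' {w} hw := by
    refine ⟨fun i => ?_, fun i => ?_⟩
    · rw [Equiv.Perm.inv_eq_iff_eq, hw.1, Equiv.Perm.coe_inv, Equiv.apply_symm_apply]
    · rw [Equiv.Perm.inv_eq_iff_eq, hw.2, Equiv.Perm.coe_inv, Equiv.apply_symm_apply]

lemma unfrozenC_of_mem_window {n : ℕ} {i : ℤ} (h1 : 1 ≤ i) (h2 : i ≤ n) : UnfrozenC n i :=
  fun h => by have := Int.le_of_dvd (by omega) h; omega

namespace IsAffineSignedPerm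

variable {n : ℕ} {w v : Equiv.Perm ℤ}

lemma mul (hw : IsAffineSignedPerm n w) (hv : IsAffineSignedPerm n v) :
    IsAffineSignedPerm n (w * v) :=
  (affineSignedPermGroup n).mul_mem hw hv

lemma map_zero (hw : IsAffineSignedPerm n w) : w 0 = 0 := by
  have := hw.1 0
  rw [neg_zero] at this
  omega

lemma map_add_two (hw : IsAffineSignedPerm n w) : w (n + 2) = 2 * ((n : ℤ) + 1) - w n := by
  rw [← hw.2]
  ring_nf

lemma map_add_period (hw : IsAffineSignedPerm n w) (i : ℤ) :
    w (i + 2 * ((n : ℤ) + 1)) = w i + 2 * ((n : ℤ) + 1) := by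
  have := hw.2 (-i)
  rw [sub_neg_eq_add, add_comm, hw.1] at this
  linarith

lemma map_add_mul_period (hw : IsAffineSignedPerm n w) (m i : ℤ) :
    w (i + m * (2 * ((n : ℤ) + 1))) = w i + m * (2 * ((n : ℤ) + 1)) := by
  induction m using Int.induction_on with
  | zero => simp
  | succ k ih => rw [add_one_mul, ← add_assoc, map_add_period hw, ih]; ring
  | pred k ih =>
    have := map_add_period hw (i + (-(k : ℤ) - 1) * (2 * ((n : ℤ) + 1)))
    rw [add_assoc, ← add_one_mul, sub_add_cancel, ih] at this
    linarith

lemma map_emod_sub (hw : IsAffineSignedPerm n w) (i : ℤ) :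
    w (i % (2 * ((n : ℤ) + 1))) - i % (2 * ((n : ℤ) + 1)) = w i - i := by
  have := map_add_mul_period hw (i / (2 * ((n : ℤ) + 1))) (i % (2 * ((n : ℤ) + 1)))
  rw [mul_comm (i / _), Int.emod_add_mul_ediv] at this
  have := Int.emod_add_mul_ediv i (2 * ((n : ℤ) + 1))
  linarith

lemma map_of_dvd (hw : IsAffineSignedPerm n w) {i : ℤ} (hi : (n : ℤ) + 1 ∣ i) : w i = i := by
  have hP : (0 : ℤ) < 2 * ((n : ℤ) + 1) := by positivity
  obtain ⟨k, hk⟩ : (n : ℤ) + 1 ∣ i % (2 * ((n : ℤ) + 1)) :=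
    Int.emod_def i _ ▸ dvd_sub hi (dvd_mul_of_dvd_left (dvd_mul_left _ 2) _)
  have h0 := Int.emod_nonneg i hP.ne'
  have h1 := Int.emod_lt_of_pos i hP
  have hk' : k = 0 ∨ k = 1 := by
    have : 0 ≤ k := by nlinarith
    have : k < 2 := by nlinarith
    omega
  have hfix : w (i % (2 * ((n : ℤ) + 1))) = i % (2 * ((n : ℤ) + 1)) := by
    rcases hk' with rfl | rfl
    · rw [hk, mul_zero, map_zero hw]
    · have := hw.2 ((n : ℤ) + 1)
      rw [show 2 * ((n : ℤ) + 1) - (n + 1) = n + 1 by ring] at this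
      rw [hk, mul_one]
      linarith
  have := map_emod_sub hw i
  linarith

lemma unfrozenC_apply (hw : IsAffineSignedPerm n w) {i : ℤ} (hi : UnfrozenC n i) :
    UnfrozenC n (w i) := fun h => hi (w.injective (map_of_dvd hw h) ▸ h)

lemma exists_abs_sub_le (hw : IsAffineSignedPerm n w) : ∃ D : ℤ, ∀ i, |w i - i| ≤ D := by
  refine ⟨∑ r ∈ Finset.range (2 * (n + 1)), |w r - r|, fun i => ?_⟩
  have hP : (0 : ℤ) < 2 * ((n : ℤ) + 1) := by positivity
  obtain ⟨r, hr⟩ : ∃ r : ℕ, (r : ℤ) = i % (2 * ((n : ℤ) + 1)) :=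
    ⟨_, Int.toNat_of_nonneg (Int.emod_nonneg i hP.ne')⟩
  have hmem : r ∈ Finset.range (2 * (n + 1)) := by
    have := Int.emod_lt_of_pos i hP
    rw [Finset.mem_range]
    omega
  rw [← map_emod_sub hw, ← hr]
  exact Finset.single_le_sum (f := fun r : ℕ => |w r - r|) (fun _ _ => abs_nonneg _) hmem

lemma ext_window (hw : IsAffineSignedPerm n w) (hv : IsAffineSignedPerm n v)
    (h : ∀ i : ℤ, 1 ≤ i → i ≤ n → w i = v i) : w = v := by
  have hP : (0 : ℤ) < 2 * ((n : ℤ) + 1) := by positivity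
  have half : ∀ i : ℤ, 0 ≤ i → i ≤ n + 1 → w i = v i := by
    intro i h0 h1
    rcases (by omega : i = 0 ∨ i = n + 1 ∨ (1 ≤ i ∧ i ≤ n)) with rfl | rfl | ⟨h0, h1⟩
    · rw [map_zero hw, map_zero hv]
    · rw [map_of_dvd hw dvd_rfl, map_of_dvd hv dvd_rfl]
    · exact h i h0 h1
  have period : ∀ i : ℤ, 0 ≤ i → i < 2 * ((n : ℤ) + 1) → w i = v i := by
    intro i h0 h1
    rcases le_or_gt i (n + 1) with hi | hi
    · exact half i h0 hi
    · have hw' := hw.2 (2 * ((n : ℤ) + 1) - i)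
      have hv' := hv.2 (2 * ((n : ℤ) + 1) - i)
      rw [sub_sub_cancel] at hw' hv'
      rw [hw', hv', half _ (by omega) (by omega)]
  ext i
  have hw' := map_emod_sub hw i
  have hv' := map_emod_sub hv i
  have := period _ (Int.emod_nonneg i hP.ne') (Int.emod_lt_of_pos i hP)
  omega

lemma eq_one_of_strictMono_window (hw : IsAffineSignedPerm n w) (h1 : 1 ≤ w 1) (hn : w n ≤ n)
    (hmono : ∀ r : ℤ, 1 ≤ r → r < n → w r < w (r + 1)) : w = 1 := by
  have up : ∀ i : ℤ, 1 ≤ i → i ≤ n → i ≤ w i := by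
    intro i hi
    induction i, hi using Int.leInduction with
    | base => exact fun _ => h1
    | succ k hk ih =>
      exact fun hkn => by have := hmono k hk (by omega); have := ih (by omega); omega
  have down : ∀ i : ℤ, i ≤ n → 1 ≤ i → w i ≤ i := by
    intro i hi
    induction i, hi using Int.leInductionDown with
    | base => exact fun _ => hn
    | pred k hk ih =>
      exact fun hk1 => by have := hmono (k - 1) hk1 (by omega); have := ih (by omega); grind
  exact hw.ext_window (affineSignedPermGroup n).one_mem fun i hi1 hin =>
    le_antisymm (down i hin hi1) (up i hi1 hin)

end IsAffineSignedPerm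

section Crossing

variable {w : Equiv.Perm ℤ} {D : ℤ}

noncomputable def crossing (w : Equiv.Perm ℤ) (y c : ℤ) : ℤ :=
  ({z | z ≤ y ∧ c < w z}.ncard : ℤ) - {z | y < z ∧ w z ≤ c}.ncard

lemma ncard_setOf_le_add_one {p : ℤ → Prop} [DecidablePred p] {y : ℤ}
    (hfin : {z | z ≤ y ∧ p z}.Finite) :
    ({z | z ≤ y + 1 ∧ p z}.ncard : ℤ) =
      {z | z ≤ y ∧ p z}.ncard + if p (y + 1) then 1 else 0 := by
  by_cases hp : p (y + 1)
  · have : {z | z ≤ y + 1 ∧ p z} = insert (y + 1) {z | z ≤ y ∧ p z} := by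
      ext z; simp only [Set.mem_ofPred_eq, Set.mem_insert_iff]; grind
    rw [this, Set.ncard_insert_of_notMem (fun h => by simp at h) hfin, if_pos hp]
    push_cast
    rfl
  · have : {z | z ≤ y + 1 ∧ p z} = {z | z ≤ y ∧ p z} := by
      ext z; simp only [Set.mem_ofPred_eq]; grind
    rw [this, if_neg hp, add_zero]

lemma ncard_setOf_lt_eq_add_one_lt {p : ℤ → Prop} [DecidablePred p] {y : ℤ}
    (hfin : {z | y + 1 < z ∧ p z}.Finite) :
    ({z | y < z ∧ p z}.ncard : ℤ) =
      {z | y + 1 < z ∧ p z}.ncard + if p (y + 1) then 1 else 0 := by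
  by_cases hp : p (y + 1)
  · have : {z | y < z ∧ p z} = insert (y + 1) {z | y + 1 < z ∧ p z} := by
      ext z; simp only [Set.mem_ofPred_eq, Set.mem_insert_iff]; grind
    rw [this, Set.ncard_insert_of_notMem (fun h => by simp at h) hfin, if_pos hp]
    push_cast
    rfl
  · have : {z | y < z ∧ p z} = {z | y + 1 < z ∧ p z} := by
      ext z; simp only [Set.mem_ofPred_eq]; grind
    rw [this, if_neg hp, add_zero]

lemma finite_setOf_le_lt (hD : ∀ z, |w z - z| ≤ D) (y c : ℤ) :
    {z | z ≤ y ∧ c < w z}.Finite :=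
  (Set.finite_Icc (c - D) y).subset fun z ⟨hzy, hcz⟩ =>
    ⟨by linarith [le_abs_self (w z - z), hD z], hzy⟩

lemma finite_setOf_lt_le (hD : ∀ z, |w z - z| ≤ D) (y c : ℤ) :
    {z | y < z ∧ w z ≤ c}.Finite :=
  (Set.finite_Icc y (c + D)).subset fun z ⟨hyz, hzc⟩ =>
    ⟨hyz.le, by linarith [neg_abs_le (w z - z), hD z]⟩

lemma crossing_add_one_left (hD : ∀ z, |w z - z| ≤ D) (y c : ℤ) :
    crossing w (y + 1) c = crossing w y c + 1 := by
  have hup := ncard_setOf_le_add_one (p := fun z => c < w z) (finite_setOf_le_lt hD y c)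
  have hdown := ncard_setOf_lt_eq_add_one_lt (p := fun z => w z ≤ c)
    (finite_setOf_lt_le hD (y + 1) c)
  simp only [crossing] at hup hdown ⊢
  split_ifs at hup hdown <;> omega

lemma crossing_eq_crossing_zero_add (hD : ∀ z, |w z - z| ≤ D) (y c : ℤ) :
    crossing w y c = crossing w 0 c + y := by
  induction y using Int.induction_on with
  | zero => simp
  | succ k ih => rw [crossing_add_one_left hD, ih]; ring
  | pred k ih =>
    have := crossing_add_one_left hD (-(k : ℤ) - 1) c
    rw [sub_add_cancel, ih] at this
    linarith

lemma crossing_inv (y c : ℤ) : crossing w⁻¹ c y = -crossing w y c := by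
  have image_up : w '' {z | z ≤ y ∧ c < w z} = {v | c < v ∧ w⁻¹ v ≤ y} := by
    ext v; simp [Equiv.image_eq_preimage_symm, and_comm]
  have image_down : w '' {z | y < z ∧ w z ≤ c} = {v | v ≤ c ∧ y < w⁻¹ v} := by
    ext v; simp [Equiv.image_eq_preimage_symm, and_comm]
  simp only [crossing, ← image_up, ← image_down, Set.ncard_image_of_injective _ w.injective]
  ring

lemma crossing_zero_zero (hodd : ∀ i, w (-i) = -w i) : crossing w 0 0 = 0 := by
  have hzero : w 0 = 0 := by have := hodd 0; rw [neg_zero] at this; omega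
  have : Neg.neg '' {z | z ≤ 0 ∧ 0 < w z} = {z | 0 < z ∧ w z ≤ 0} := by
    ext z
    simp only [Set.image_neg_eq_neg, Set.mem_neg, Set.mem_ofPred_eq, hodd]
    constructor
    · rintro ⟨h1, h2⟩
      refine ⟨lt_of_le_of_ne (by omega) fun h => ?_, by omega⟩
      rw [← h, hzero] at h2
      exact lt_irrefl 0 (neg_zero (G := ℤ) ▸ h2)
    · rintro ⟨h1, h2⟩
      refine ⟨by omega, lt_of_le_of_ne (by omega) fun h => ?_⟩
      have := w.injective (hzero.trans (neg_eq_zero.mp h.symm).symm)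
      omega
  simp only [crossing, ← this, Set.ncard_image_of_injective _ neg_injective, sub_self]

/-- Unit steps in `y`, and in `c` (through `w⁻¹`), change `crossing` by one; oddness makes it
vanish at `(0, 0)`. -/
lemma crossing_eq_sub (hodd : ∀ i, w (-i) = -w i) (hD : ∀ z, |w z - z| ≤ D) (y c : ℤ) :
    crossing w y c = y - c := by
  have hD' : ∀ z, |w⁻¹ z - z| ≤ D := fun z => by
    simpa [abs_sub_comm] using hD (w⁻¹ z)
  rw [crossing_eq_crossing_zero_add hD, ← neg_neg (crossing w 0 c), ← crossing_inv,
    crossing_eq_crossing_zero_add hD', crossing_inv, crossing_zero_zero hodd]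
  ring

end Crossing

namespace IsAffineSignedPerm

variable {n : ℕ} {w : Equiv.Perm ℤ}

lemma exists_gt_map_lt (hw : IsAffineSignedPerm n w) {x y : ℤ} (hxy : x < y)
    (hdesc : w y < w x) (hy : y ≤ w y) : ∃ k, UnfrozenC n k ∧ y < k ∧ w k < w y := by
  obtain ⟨D, hD⟩ := hw.exists_abs_sub_le
  by_contra! h
  have hcross := crossing_eq_sub hw.1 hD y (w y)
  have hup : 0 < {z | z ≤ y ∧ w y < w z}.ncard :=
    (Set.ncard_pos (finite_setOf_le_lt hD _ _)).mpr ⟨x, hxy.le, hdesc⟩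
  have hsub : {z | y < z ∧ w z ≤ w y} ⊆ Set.Ioc y (w y) := by
    rintro z ⟨hyz, hzw⟩
    by_cases hz : UnfrozenC n z
    · have := w.injective (le_antisymm hzw (h z hz hyz))
      omega
    · exact ⟨hyz, hw.map_of_dvd (not_not.mp hz) ▸ hzw⟩
  have hdown : {z | y < z ∧ w z ≤ w y}.ncard ≤ (w y - y).toNat := by
    calc _ ≤ (Set.Ioc y (w y)).ncard := Set.ncard_le_ncard hsub (Set.finite_Ioc _ _)
      _ = _ := by rw [← Finset.coe_Ioc, Set.ncard_coe_finset, Int.card_Ioc]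
  simp only [crossing] at hcross
  omega

lemma exists_lt_lt_map (hw : IsAffineSignedPerm n w) {y z : ℤ} (hyz : y < z)
    (hdesc : w z < w y) (hy : w y ≤ y) : ∃ k, UnfrozenC n k ∧ k < y ∧ w y < w k := by
  obtain ⟨k, hk, hyk, hwk⟩ := hw.exists_gt_map_lt (x := -z) (y := -y) (by omega)
    (by rw [hw.1, hw.1]; omega) (by rw [hw.1]; omega)
  refine ⟨-k, fun h => hk (by simpa using h), by omega, ?_⟩
  rw [hw.1] at hwk ⊢
  omega

lemma lt_map_and_map_lt_of_descent (hw : IsAffineSignedPerm n w)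
    (hav : ¬GloballyContains321C n w) {i j : ℤ} (hi : UnfrozenC n i) (hj : UnfrozenC n j)
    (hij : i < j) (hdesc : w j < w i) : i < w i ∧ w j < j := by
  constructor
  · by_contra! h
    obtain ⟨x, hx, hxi, hwx⟩ := hw.exists_lt_lt_map hij hdesc h
    exact hav ⟨x, i, j, hx, hi, hj, hxi, hij, hwx, hdesc⟩
  · by_contra! h
    obtain ⟨k, hk, hjk, hwk⟩ := hw.exists_gt_map_lt hij hdesc h
    exact hav ⟨i, j, k, hi, hj, hk, hij, hjk, hdesc, hwk⟩

end IsAffineSignedPerm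

section Reflection

variable {n : ℕ} {a d x : ℤ}

def reflection (n : ℕ) (a d x : ℤ) : ℤ :=
  if (x : ZMod (2 * (n + 1))) = a ∨ (x : ZMod (2 * (n + 1))) = -a - d then x + d
  else if (x : ZMod (2 * (n + 1))) = a + d ∨ (x : ZMod (2 * (n + 1))) = -a then x - d
  else x

/-- No residue class is moved both up and down by `reflection n a d`. -/
def IsReflectionData (n : ℕ) (a d : ℤ) : Prop :=
  ¬ 2 * ((n : ℤ) + 1) ∣ d ∧ ¬ 2 * ((n : ℤ) + 1) ∣ 2 * a ∧
    ¬ 2 * ((n : ℤ) + 1) ∣ 2 * (a + d)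

lemma IsReflectionData.not_down_of_up (h : IsReflectionData n a d) {c : ZMod (2 * (n + 1))}
    (hup : c = a ∨ c = -a - d) : ¬(c = a + d ∨ c = -a) := by
  obtain ⟨h1, h2, h3⟩ := h
  have dvd_of_eq_zero (k : ℤ) (hk : (k : ZMod (2 * (n + 1))) = 0) :
      2 * ((n : ℤ) + 1) ∣ k := by
    exact_mod_cast (ZMod.intCast_zmod_eq_zero_iff_dvd k _).mp hk
  rcases hup with rfl | rfl <;> rintro (h | h)
  · exact h1 (dvd_of_eq_zero d (by linear_combination -h))
  · exact h2 (dvd_of_eq_zero (2 * a) (by push_cast; linear_combination h))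
  · exact h3 (dvd_of_eq_zero (2 * (a + d)) (by push_cast; linear_combination -h))
  · exact h1 (dvd_of_eq_zero d (by linear_combination -h))

lemma reflection_of_up (h : (x : ZMod (2 * (n + 1))) = a ∨ (x : ZMod (2 * (n + 1))) = -a - d) :
    reflection n a d x = x + d :=
  if_pos h

lemma reflection_of_down (hd : IsReflectionData n a d)
    (h : (x : ZMod (2 * (n + 1))) = a + d ∨ (x : ZMod (2 * (n + 1))) = -a) :
    reflection n a d x = x - d := by
  rw [reflection, if_neg fun hup => hd.not_down_of_up hup h, if_pos h]

lemma reflection_of_not_up_not_down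
    (hup : ¬((x : ZMod (2 * (n + 1))) = a ∨ (x : ZMod (2 * (n + 1))) = -a - d))
    (hdown : ¬((x : ZMod (2 * (n + 1))) = a + d ∨ (x : ZMod (2 * (n + 1))) = -a)) :
    reflection n a d x = x := by
  rw [reflection, if_neg hup, if_neg hdown]

lemma reflection_involutive (h : IsReflectionData n a d) :
    Function.Involutive (reflection n a d) := by
  intro x
  by_cases hup : (x : ZMod (2 * (n + 1))) = a ∨ (x : ZMod (2 * (n + 1))) = -a - d
  · rw [reflection_of_up hup, reflection_of_down h, add_sub_cancel_right]
    push_cast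
    rcases hup with hx | hx <;> rw [hx] <;> [left; right] <;> ring
  by_cases hdown : (x : ZMod (2 * (n + 1))) = a + d ∨ (x : ZMod (2 * (n + 1))) = -a
  · rw [reflection_of_down h hdown, reflection_of_up, sub_add_cancel]
    push_cast
    rcases hdown with hx | hx <;> rw [hx] <;> [left; right] <;> ring
  · rw [reflection_of_not_up_not_down hup hdown, reflection_of_not_up_not_down hup hdown]

lemma reflection_neg (h : IsReflectionData n a d) (x : ℤ) :
    reflection n a d (-x) = -reflection n a d x := by
  have up_neg :
      (((-x : ℤ) : ZMod (2 * (n + 1))) = a ∨ ((-x : ℤ) : ZMod (2 * (n + 1))) = -a - d) ↔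
        ((x : ZMod (2 * (n + 1))) = a + d ∨ (x : ZMod (2 * (n + 1))) = -a) := by
    rw [Int.cast_neg, neg_eq_iff_eq_neg, neg_eq_iff_eq_neg, neg_sub', sub_neg_eq_add, neg_neg,
      or_comm]
  have down_neg :
      (((-x : ℤ) : ZMod (2 * (n + 1))) = a + d ∨ ((-x : ℤ) : ZMod (2 * (n + 1))) = -a) ↔
        ((x : ZMod (2 * (n + 1))) = a ∨ (x : ZMod (2 * (n + 1))) = -a - d) := by
    rw [Int.cast_neg, neg_eq_iff_eq_neg, neg_eq_iff_eq_neg, neg_neg, neg_add', or_comm]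
  by_cases hup : (x : ZMod (2 * (n + 1))) = a ∨ (x : ZMod (2 * (n + 1))) = -a - d
  · rw [reflection_of_up hup, reflection_of_down h (down_neg.mpr hup)]
    ring
  by_cases hdown : (x : ZMod (2 * (n + 1))) = a + d ∨ (x : ZMod (2 * (n + 1))) = -a
  · rw [reflection_of_down h hdown, reflection_of_up (up_neg.mpr hdown)]
    ring
  · rw [reflection_of_not_up_not_down hup hdown,
      reflection_of_not_up_not_down (mt up_neg.mp hdown) (mt down_neg.mp hup)]

lemma reflection_add_period (x : ℤ) :
    reflection n a d (x + 2 * ((n : ℤ) + 1)) = reflection n a d x + 2 * ((n : ℤ) + 1) := by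
  have hP : ((x + 2 * ((n : ℤ) + 1) : ℤ) : ZMod (2 * (n + 1))) = x := by
    have : ((2 * (n + 1) : ℕ) : ZMod (2 * (n + 1))) = 0 := ZMod.natCast_self _
    push_cast at this ⊢
    rw [this, add_zero]
  simp only [reflection, hP]
  split_ifs <;> ring

lemma isAffineSignedPerm_reflection (h : IsReflectionData n a d) :
    IsAffineSignedPerm n ((reflection_involutive h).toPerm _) := by
  refine ⟨reflection_neg h, fun x => ?_⟩
  simp only [Function.Involutive.coe_toPerm]
  rw [sub_eq_neg_add, reflection_add_period, reflection_neg h]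
  ring

lemma reflection_eq_add_of_lt (hd : 0 < d) (h : x < reflection n a d x) :
    ∃ m : ℤ, (x = a + m * (2 * ((n : ℤ) + 1)) ∧
        reflection n a d x = a + d + m * (2 * ((n : ℤ) + 1))) ∨
      (x = -a - d + m * (2 * ((n : ℤ) + 1)) ∧
        reflection n a d x = -a + m * (2 * ((n : ℤ) + 1))) := by
  by_cases hup : (x : ZMod (2 * (n + 1))) = a ∨ (x : ZMod (2 * (n + 1))) = -a - d
  · rw [reflection_of_up hup]
    rcases hup with hx | hx
    · obtain ⟨k, hk⟩ := (ZMod.intCast_eq_intCast_iff_dvd_sub a x _).mp hx.symm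
      push_cast at hk
      exact ⟨k, Or.inl ⟨by linear_combination hk, by linear_combination hk⟩⟩
    · rw [← Int.cast_neg, ← Int.cast_sub] at hx
      obtain ⟨k, hk⟩ := (ZMod.intCast_eq_intCast_iff_dvd_sub _ x _).mp hx.symm
      push_cast at hk
      exact ⟨k, Or.inr ⟨by linear_combination hk, by linear_combination hk⟩⟩
  · unfold reflection at h
    split_ifs at h <;> omega

end Reflection

lemma intCast_ne_intCast_of_lt {P : ℕ} {u v : ℤ} (h : u ≠ v) (h1 : -(P : ℤ) < u - v)
    (h2 : u - v < P) : (u : ZMod P) ≠ v := by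
  rw [Ne, ZMod.intCast_eq_intCast_iff_dvd_sub]
  intro hdvd
  have := Int.eq_zero_of_abs_lt_dvd hdvd (abs_lt.mpr ⟨by omega, by omega⟩)
  omega

lemma _root_.Function.Involutive.lt_of_no_gap {s : ℤ → ℤ} (hs : Function.Involutive s)
    {p : ℤ → Prop} (hp : ∀ x, p x → p (s x))
    (hgap : ∀ x z, p z → x < z → z < s x → False) {x y : ℤ} (hx : p x) (hy : p y)
    (hxy : x < y) (hne : s x ≠ y) : s x < s y := by
  by_contra! hle
  have hlt : s y < s x := lt_of_le_of_ne hle fun h => by have := hs.injective h; omega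
  rcases lt_or_ge x (s x) with hx' | hx'
  · have hy' : s x < y := by
      rcases lt_trichotomy y (s x) with h | h | h
      exacts [(hgap x y hy hxy h).elim, absurd h.symm hne, h]
    exact hgap (s y) (s x) (hp x hx) hlt (by rwa [hs y])
  · exact hgap (s y) x hx (by omega) (by rwa [hs y])

section Generators

variable {n t : ℕ} {x : ℤ}

def genLeft (t : ℕ) : ℤ := if t = 0 then -1 else t

def genRight (n t : ℕ) : ℤ := if t = n then t + 2 else t + 1

lemma genLeft_zero : genLeft 0 = -1 := rfl

lemma genLeft_of_ne_zero (ht : t ≠ 0) : genLeft t = t := by simp [genLeft, ht]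

lemma genRight_zero (hn : 0 < n) : genRight n 0 = 1 := by simp [genRight, hn.ne]

lemma genRight_self : genRight n n = n + 2 := by simp [genRight]

lemma genRight_of_ne (ht : t ≠ n) : genRight n t = t + 1 := by simp [genRight, ht]

lemma genLeft_genRight_cases (hn : 0 < n) (ht : t ≤ n) :
    (t = 0 ∧ genLeft t = -1 ∧ genRight n t = 1) ∨
      (t = n ∧ genLeft t = n ∧ genRight n t = n + 2) ∨
      (0 < t ∧ t < n ∧ genLeft t = t ∧ genRight n t = t + 1) := by
  unfold genLeft genRight
  split_ifs <;> omega

lemma isReflectionData_gen (hn : 0 < n) (ht : t ≤ n) :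
    IsReflectionData n (genLeft t) (genRight n t - genLeft t) := by
  rcases genLeft_genRight_cases hn ht with h | h | h <;> refine ⟨?_, ?_, ?_⟩ <;>
    refine (Int.not_dvd_iff_lt_mul_succ _ (by omega)).mpr ?_ <;>
    first
    | exact ⟨0, by omega, by omega⟩
    | exact ⟨-1, by omega, by omega⟩
    | exact ⟨1, by omega, by omega⟩

open Classical in
/-- The Coxeter generator `s_t` (see `isGenC_iff`): it exchanges the classes of `genLeft t` and
`genRight n t` modulo `2(n+1)`, and those of their negatives. For `t > n` the value is junk. -/
noncomputable def gen (n t : ℕ) : Equiv.Perm ℤ :=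
  if h : IsReflectionData n (genLeft t) (genRight n t - genLeft t) then
    (reflection_involutive h).toPerm _
  else 1

lemma gen_apply (hn : 0 < n) (ht : t ≤ n) (x : ℤ) :
    gen n t x = reflection n (genLeft t) (genRight n t - genLeft t) x := by
  rw [gen, dif_pos (isReflectionData_gen hn ht), Function.Involutive.coe_toPerm]

lemma isAffineSignedPerm_gen (n t : ℕ) : IsAffineSignedPerm n (gen n t) := by
  unfold gen
  split_ifs with h
  exacts [isAffineSignedPerm_reflection h, (affineSignedPermGroup n).one_mem]

lemma gen_mul_self (n t : ℕ) : gen n t * gen n t = 1 := by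
  unfold gen
  split_ifs with h
  · ext x
    simp only [Equiv.Perm.mul_apply, Function.Involutive.coe_toPerm, Equiv.Perm.one_apply]
    rw [reflection_involutive h x]
  · exact one_mul 1

lemma gen_involutive (n t : ℕ) : Function.Involutive (gen n t) := fun x => by
  rw [← Equiv.Perm.mul_apply, gen_mul_self, Equiv.Perm.one_apply]

lemma gen_apply_of_mem_window (hn : 0 < n) (ht : t ≤ n) (hx1 : 1 ≤ x) (hxn : x ≤ n) :
    gen n t x = Equiv.swap (genLeft t) (genRight n t) x := by
  have hc := genLeft_genRight_cases hn ht
  rw [gen_apply hn ht, Equiv.swap_apply_def]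
  split_ifs with hl hr
  · rw [hl, reflection_of_up (Or.inl rfl)]
    ring
  · rw [reflection_of_down (isReflectionData_gen hn ht) (Or.inl (by rw [hr]; push_cast; ring)), hr]
    ring
  · apply reflection_of_not_up_not_down <;> rintro (h | h)
    · exact intCast_ne_intCast_of_lt hl (by omega) (by omega) h
    · rw [← Int.cast_neg, ← Int.cast_sub] at h
      exact intCast_ne_intCast_of_lt (by omega) (by omega) (by omega) h
    · rw [← Int.cast_add] at h
      exact intCast_ne_intCast_of_lt (by omega) (by omega) (by omega) h
    · rw [← Int.cast_neg] at h
      exact intCast_ne_intCast_of_lt (by omega) (by omega) (by omega) h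

lemma gen_apply_of_mem_window_of_ne (hn : 0 < n) (ht : t ≤ n) {j : ℤ}
    (hj : j ∈ Finset.Icc 1 (n : ℤ)) (hl : j ≠ genLeft t) (hr : j ≠ genRight n t) :
    gen n t j = j := by
  rw [Finset.mem_Icc] at hj
  rw [gen_apply_of_mem_window hn ht hj.1 hj.2, Equiv.swap_apply_of_ne_of_ne hl hr]

lemma isGenC_iff_window (hn : 0 < n) {σ : Equiv.Perm ℤ} :
    IsGenC n t σ ↔ IsAffineSignedPerm n σ ∧ t ≤ n ∧
      ∀ j : ℤ, 1 ≤ j → j ≤ n → σ j = Equiv.swap (genLeft t) (genRight n t) j := by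
  unfold IsGenC
  refine and_congr_right fun _ => ?_
  split_ifs with h0 hN
  · subst h0
    rw [genLeft_zero, genRight_zero hn]
    constructor
    · rintro ⟨h1, h2⟩
      refine ⟨Nat.zero_le _, fun j hj1 hjn => ?_⟩
      rcases hj1.eq_or_lt with rfl | hj1
      · rw [h1, Equiv.swap_apply_right]
      · rw [h2 j (by omega) hjn, Equiv.swap_apply_of_ne_of_ne (by omega) (by omega)]
    · rintro ⟨-, h⟩
      refine ⟨by rw [h 1 le_rfl (by omega), Equiv.swap_apply_right], fun j hj2 hjn => ?_⟩
      rw [h j (by omega) hjn, Equiv.swap_apply_of_ne_of_ne (by omega) (by omega)]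
  · subst t
    rw [genLeft_of_ne_zero hn.ne', genRight_self]
    constructor
    · rintro ⟨h1, h2⟩
      refine ⟨le_rfl, fun j hj1 hjn => ?_⟩
      rcases hjn.eq_or_lt with rfl | hjn
      · rw [h1, Equiv.swap_apply_left]
      · rw [h2 j hj1 (by omega), Equiv.swap_apply_of_ne_of_ne (by omega) (by omega)]
    · rintro ⟨-, h⟩
      refine ⟨by rw [h n (by omega) le_rfl, Equiv.swap_apply_left], fun j hj1 hjn => ?_⟩
      rw [h j hj1 (by omega), Equiv.swap_apply_of_ne_of_ne (by omega) (by omega)]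
  · rw [genLeft_of_ne_zero h0, genRight_of_ne hN]
    constructor
    · rintro ⟨htn, h1, h2, h3⟩
      refine ⟨htn.le, fun j hj1 hjn => ?_⟩
      rw [Equiv.swap_apply_def]
      split_ifs with hj hj'
      exacts [hj ▸ h1, hj' ▸ h2, h3 j hj1 hjn hj hj']
    · rintro ⟨htn, h⟩
      refine ⟨by omega, by rw [h t (by omega) (by omega), Equiv.swap_apply_left],
        by rw [h (t + 1) (by omega) (by omega), Equiv.swap_apply_right],
        fun j hj1 hjn hj hj' => ?_⟩
      rw [h j hj1 hjn, Equiv.swap_apply_of_ne_of_ne hj hj']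

lemma isGenC_iff (hn : 0 < n) {σ : Equiv.Perm ℤ} :
    IsGenC n t σ ↔ t ≤ n ∧ σ = gen n t := by
  rw [isGenC_iff_window hn]
  constructor
  · rintro ⟨hσ, ht, h⟩
    refine ⟨ht, hσ.ext_window (isAffineSignedPerm_gen n t) fun j hj1 hjn => ?_⟩
    rw [h j hj1 hjn, gen_apply_of_mem_window hn ht hj1 hjn]
  · rintro ⟨ht, rfl⟩
    exact ⟨isAffineSignedPerm_gen n t, ht,
      fun j hj1 hjn => gen_apply_of_mem_window hn ht hj1 hjn⟩

lemma gen_eq_of_lt (hn : 0 < n) (ht : t ≤ n) (h : x < gen n t x) :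
    ∃ m : ℤ, (x = genLeft t + m * (2 * ((n : ℤ) + 1)) ∧
        gen n t x = genRight n t + m * (2 * ((n : ℤ) + 1))) ∨
      (x = -genRight n t + m * (2 * ((n : ℤ) + 1)) ∧
        gen n t x = -genLeft t + m * (2 * ((n : ℤ) + 1))) := by
  have hc := genLeft_genRight_cases hn ht
  rw [gen_apply hn ht] at h ⊢
  obtain ⟨m, h | h⟩ := reflection_eq_add_of_lt (by omega) h
  · exact ⟨m, Or.inl ⟨h.1, by rw [h.2]; ring⟩⟩
  · exact ⟨m, Or.inr ⟨by rw [h.1]; ring, h.2⟩⟩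

lemma dvd_of_lt_of_lt_gen (hn : 0 < n) (ht : t ≤ n) {z : ℤ} (hxz : x < z) (hz : z < gen n t x) :
    (n : ℤ) + 1 ∣ z := by
  have hc := genLeft_genRight_cases hn ht
  obtain ⟨m, hm⟩ := gen_eq_of_lt hn ht (hxz.trans hz)
  rcases (by omega : z = m * (2 * ((n : ℤ) + 1)) ∨ z = n + 1 + m * (2 * ((n : ℤ) + 1)) ∨
      z = -(n + 1) + m * (2 * ((n : ℤ) + 1))) with hz | hz | hz
  exacts [⟨2 * m, by rw [hz]; ring⟩, ⟨2 * m + 1, by rw [hz]; ring⟩,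
    ⟨2 * m - 1, by rw [hz]; ring⟩]

lemma gen_lt_gen (hn : 0 < n) (ht : t ≤ n) {y : ℤ} (hx : UnfrozenC n x) (hy : UnfrozenC n y)
    (hxy : x < y) (hne : gen n t x ≠ y) : gen n t x < gen n t y :=
  (gen_involutive n t).lt_of_no_gap (fun _ hz => (isAffineSignedPerm_gen n t).unfrozenC_apply hz)
    (fun _ _ hz hxz hzs => hz (dvd_of_lt_of_lt_gen hn ht hxz hzs)) hx hy hxy hne

end Generators

section Disarray

variable {n t : ℕ} {w : Equiv.Perm ℤ}

lemma disC_mul_eq_add_sum (w s : Equiv.Perm ℤ) {S : Finset ℤ}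
    (hS : S ⊆ Finset.Icc 1 (n : ℤ))
    (hfix : ∀ j ∈ Finset.Icc 1 (n : ℤ), j ∉ S → s j = j) :
    disC n (w * s) = disC n w + ∑ j ∈ S, (|w (s j) - j| - |w j - j|) := by
  have hout : ∑ j ∈ Finset.Icc 1 (n : ℤ) \ S, |w (s j) - j| =
      ∑ j ∈ Finset.Icc 1 (n : ℤ) \ S, |w j - j| :=
    Finset.sum_congr rfl fun j hj => by
      rw [Finset.mem_sdiff] at hj
      rw [hfix j hj.1 hj.2]
  simp only [disC, Equiv.Perm.mul_apply, ← Finset.sum_sdiff hS, hout, Finset.sum_sub_distrib]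
  ring

lemma disC_mul_gen_zero (hn : 0 < n) (hw : IsAffineSignedPerm n w) :
    disC n (w * gen n 0) = disC n w + (|w 1 + 1| - |w 1 - 1|) := by
  rw [disC_mul_eq_add_sum w _ (S := {1}) (by simp; omega) fun j hj hjS =>
    gen_apply_of_mem_window_of_ne hn (Nat.zero_le n) hj
      (by rw [genLeft_zero]; simp at hj; omega) (by rw [genRight_zero hn]; simpa using hjS),
    Finset.sum_singleton, gen_apply_of_mem_window hn (Nat.zero_le n) le_rfl (by omega),
    genLeft_zero, genRight_zero hn, Equiv.swap_apply_right, hw.1]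
  simp only [abs_eq_max_neg]
  omega

lemma disC_mul_gen_self (hn : 0 < n) (hw : IsAffineSignedPerm n w) :
    disC n (w * gen n n) = disC n w + (|w n - (n + 2)| - |w n - n|) := by
  rw [disC_mul_eq_add_sum w _ (S := {(n : ℤ)}) (by simp; omega) fun j hj hjS =>
    gen_apply_of_mem_window_of_ne hn le_rfl hj
      (by rw [genLeft_of_ne_zero hn.ne']; simpa using hjS)
      (by rw [genRight_self]; simp at hj; omega),
    Finset.sum_singleton, gen_apply_of_mem_window hn le_rfl (by omega) le_rfl,
    genLeft_of_ne_zero hn.ne', genRight_self, Equiv.swap_apply_left, hw.map_add_two]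
  simp only [abs_eq_max_neg]
  omega

lemma disC_mul_gen_of_pos_of_lt (hn : 0 < n) (h0 : 0 < t) (htn : t < n) :
    disC n (w * gen n t) = disC n w + (|w (t + 1) - t| - |w t - t| +
      (|w t - (t + 1)| - |w (t + 1) - (t + 1)|)) := by
  rw [disC_mul_eq_add_sum w _ (S := {(t : ℤ), (t : ℤ) + 1}) (by intro j; simp; omega)
    fun j hj hjS => gen_apply_of_mem_window_of_ne hn htn.le hj
      (by rw [genLeft_of_ne_zero h0.ne']; simp at hjS; omega)
      (by rw [genRight_of_ne htn.ne]; simp at hjS; omega),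
    Finset.sum_pair (by omega), gen_apply_of_mem_window hn htn.le (by omega) (by omega),
    gen_apply_of_mem_window hn htn.le (by omega) (by omega), genLeft_of_ne_zero h0.ne',
    genRight_of_ne htn.ne, Equiv.swap_apply_left, Equiv.swap_apply_right]

lemma disC_mul_gen_cases (hn : 0 < n) (ht : t ≤ n) (hw : IsAffineSignedPerm n w) :
    (genRight n t ≤ w (genLeft t) ∧ w (genRight n t) ≤ genLeft t ∧
        disC n (w * gen n t) = disC n w - 2) ∨
      (¬(genRight n t ≤ w (genLeft t) ∧ w (genRight n t) ≤ genLeft t) ∧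
        disC n w ≤ disC n (w * gen n t) ∧ disC n (w * gen n t) ≤ disC n w + 2) := by
  rcases genLeft_genRight_cases hn ht with
    ⟨rfl, hl, hr⟩ | ⟨htn, hl, hr⟩ | ⟨h0, htn, hl, hr⟩ <;> rw [hl, hr]
  · have : w 1 ≠ 0 := fun h => one_ne_zero (w.injective (h.trans hw.map_zero.symm))
    rw [disC_mul_gen_zero hn hw, hw.1]
    simp only [abs_eq_max_neg]
    omega
  · subst t
    have : w n ≠ n + 1 := fun h => by
      have := w.injective (h.trans (hw.map_of_dvd dvd_rfl).symm)
      omega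
    rw [disC_mul_gen_self hn hw, hw.map_add_two]
    simp only [abs_eq_max_neg]
    omega
  · rw [disC_mul_gen_of_pos_of_lt hn h0 htn]
    simp only [abs_eq_max_neg]
    omega

lemma disC_mul_gen_eq_sub_two_iff (hn : 0 < n) (ht : t ≤ n) (hw : IsAffineSignedPerm n w) :
    disC n (w * gen n t) = disC n w - 2 ↔
      genRight n t ≤ w (genLeft t) ∧ w (genRight n t) ≤ genLeft t := by
  rcases disC_mul_gen_cases hn ht hw with ⟨h1, h2, h3⟩ | ⟨h1, h2, -⟩
  · exact iff_of_true h3 ⟨h1, h2⟩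
  · exact iff_of_false (by omega) h1

lemma disC_mul_gen_le (hn : 0 < n) (ht : t ≤ n) (hw : IsAffineSignedPerm n w) :
    disC n (w * gen n t) ≤ disC n w + 2 := by
  rcases disC_mul_gen_cases hn ht hw with ⟨-, -, h⟩ | ⟨-, -, h⟩ <;> omega

lemma le_map_and_map_le_of_gen_eq (hn : 0 < n) (ht : t ≤ n) (hw : IsAffineSignedPerm n w)
    (hst : genRight n t ≤ w (genLeft t) ∧ w (genRight n t) ≤ genLeft t) {x y : ℤ}
    (hxy : x < y) (hgen : gen n t x = y) : y ≤ w x ∧ w y ≤ x := by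
  obtain ⟨m, ⟨hx, hy⟩ | ⟨hx, hy⟩⟩ := gen_eq_of_lt hn ht (hgen ▸ hxy) <;>
    rw [hgen] at hy <;> subst hx hy
  · rw [hw.map_add_mul_period, hw.map_add_mul_period]
    omega
  · rw [hw.map_add_mul_period, hw.map_add_mul_period, hw.1, hw.1]
    omega

end Disarray

section Patterns

variable {n t : ℕ} {w : Equiv.Perm ℤ}

lemma globallyContains321C_mul_gen_of_ne (hn : 0 < n) (ht : t ≤ n) {i j k : ℤ}
    (hi : UnfrozenC n i) (hj : UnfrozenC n j) (hk : UnfrozenC n k) (hij : i < j) (hjk : j < k)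
    (h1 : w j < w i) (h2 : w k < w j) (hpij : gen n t i ≠ j) (hpjk : gen n t j ≠ k) :
    GloballyContains321C n (w * gen n t) := by
  have haff := isAffineSignedPerm_gen n t
  refine ⟨gen n t i, gen n t j, gen n t k, haff.unfrozenC_apply hi, haff.unfrozenC_apply hj,
    haff.unfrozenC_apply hk, gen_lt_gen hn ht hi hj hij hpij, gen_lt_gen hn ht hj hk hjk hpjk,
    ?_, ?_⟩ <;>
    simpa only [Equiv.Perm.mul_apply, gen_involutive n t _]

lemma not_globallyContains321C_mul_gen (hn : 0 < n) (ht : t ≤ n) (hw : IsAffineSignedPerm n w)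
    (hav : ¬GloballyContains321C n w) (hdrop : disC n (w * gen n t) = disC n w - 2) :
    ¬GloballyContains321C n (w * gen n t) := by
  have hst := (disC_mul_gen_eq_sub_two_iff hn ht hw).mp hdrop
  rintro ⟨i, j, k, hi, hj, hk, hij, hjk, h1, h2⟩
  by_cases hpij : gen n t i = j
  · have := le_map_and_map_le_of_gen_eq hn ht hw hst hij hpij
    have hgj : gen n t j = i := by rw [← hpij, gen_involutive n t]
    rw [Equiv.Perm.mul_apply, Equiv.Perm.mul_apply, hpij, hgj] at h1
    omega
  by_cases hpjk : gen n t j = k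
  · have := le_map_and_map_le_of_gen_eq hn ht hw hst hjk hpjk
    have hgk : gen n t k = j := by rw [← hpjk, gen_involutive n t]
    rw [Equiv.Perm.mul_apply, Equiv.Perm.mul_apply, hpjk, hgk] at h2
    omega
  apply hav
  simpa only [mul_assoc, gen_mul_self, mul_one] using
    globallyContains321C_mul_gen_of_ne hn ht hi hj hk hij hjk h1 h2 hpij hpjk

lemma globallyContains321C_mul_gen (hn : 0 < n) (ht : t ≤ n) (hw : IsAffineSignedPerm n w)
    (hc : GloballyContains321C n w) (hdrop : disC n (w * gen n t) = disC n w - 2) :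
    GloballyContains321C n (w * gen n t) := by
  have hst := (disC_mul_gen_eq_sub_two_iff hn ht hw).mp hdrop
  have hv := hw.mul (isAffineSignedPerm_gen n t)
  have hvgen : ∀ z, (w * gen n t) (gen n t z) = w z := fun z => by
    rw [Equiv.Perm.mul_apply, gen_involutive n t]
  obtain ⟨i, j, k, hi, hj, hk, hij, hjk, h1, h2⟩ := hc
  by_cases hpij : gen n t i = j
  · have hstij := le_map_and_map_le_of_gen_eq hn ht hw hst hij hpij
    have hgj : gen n t j = i := by rw [← hpij, gen_involutive n t]
    have hik : i < gen n t k := hgj ▸ gen_lt_gen hn ht hj hk hjk (by omega)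
    have hvi : (w * gen n t) i = w j := by rw [← hgj, hvgen]
    obtain ⟨x, hx, hxi, hvx⟩ := hv.exists_lt_lt_map (z := gen n t k) hik
      (by rw [hvgen, hvi]; omega) (by rw [hvi]; exact hstij.2)
    exact ⟨x, i, gen n t k, hx, hi, (isAffineSignedPerm_gen n t).unfrozenC_apply hk, hxi, hik,
      hvx, by rw [hvgen, hvi]; omega⟩
  by_cases hpjk : gen n t j = k
  · have hstjk := le_map_and_map_le_of_gen_eq hn ht hw hst hjk hpjk
    have hik : gen n t i < k := hpjk ▸ gen_lt_gen hn ht hi hj hij hpij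
    have hvk : (w * gen n t) k = w j := by rw [← hpjk, hvgen]
    obtain ⟨y, hy, hky, hvy⟩ := hv.exists_gt_map_lt (x := gen n t i) hik
      (by rw [hvgen, hvk]; omega) (by rw [hvk]; exact hstjk.1)
    exact ⟨gen n t i, k, y, (isAffineSignedPerm_gen n t).unfrozenC_apply hi, hk, hy, hik, hky,
      by rw [hvgen, hvk]; omega, hvy⟩
  exact globallyContains321C_mul_gen_of_ne hn ht hi hj hk hij hjk h1 h2 hpij hpjk

lemma exists_disC_mul_gen_eq_sub_two (hn : 0 < n) (hw : IsAffineSignedPerm n w)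
    (hav : ¬GloballyContains321C n w) (hne : w ≠ 1) :
    ∃ t ≤ n, disC n (w * gen n t) = disC n w - 2 := by
  by_contra! h
  have hst : ∀ t ≤ n, ¬(genRight n t ≤ w (genLeft t) ∧ w (genRight n t) ≤ genLeft t) :=
    fun t ht hst => h t ht ((disC_mul_gen_eq_sub_two_iff hn ht hw).mpr hst)
  refine hne (hw.eq_one_of_strictMono_window ?_ ?_ fun r hr1 hrn => ?_)
  · have h0st := hst 0 (Nat.zero_le n)
    rw [genLeft_zero, genRight_zero hn, hw.1] at h0st
    have : w 1 ≠ 0 := fun h => one_ne_zero (w.injective (h.trans hw.map_zero.symm))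
    omega
  · have hnst := hst n le_rfl
    rw [genLeft_of_ne_zero hn.ne', genRight_self, hw.map_add_two] at hnst
    have : w n ≠ n + 1 := fun h => by
      have := w.injective (h.trans (hw.map_of_dvd dvd_rfl).symm)
      omega
    omega
  · lift r to ℕ using (by omega)
    by_contra! hle
    have hdesc : w (r + 1) < w r := lt_of_le_of_ne hle fun h => by have := w.injective h; omega
    have := hw.lt_map_and_map_lt_of_descent hav (unfrozenC_of_mem_window hr1 hrn.le)
      (unfrozenC_of_mem_window (by omega) (by omega)) (lt_add_one _) hdesc
    apply hst r (by omega)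
    rw [genLeft_of_ne_zero (by omega), genRight_of_ne (by omega)]
    omega

end Patterns

section Words

variable {n : ℕ} {w : Equiv.Perm ℤ} {l : List ℕ}

lemma disC_nonneg (n : ℕ) (w : Equiv.Perm ℤ) : 0 ≤ disC n w :=
  Finset.sum_nonneg fun _ _ => abs_nonneg _

lemma disC_one (n : ℕ) : disC n 1 = 0 := by simp [disC]

lemma eq_one_of_disC_eq_zero (hw : IsAffineSignedPerm n w) (h : disC n w = 0) : w = 1 := by
  rw [disC, Finset.sum_eq_zero_iff_of_nonneg fun _ _ => abs_nonneg _] at h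
  refine hw.ext_window (affineSignedPermGroup n).one_mem fun i hi1 hin => ?_
  have := abs_eq_zero.mp (h i (Finset.mem_Icc.mpr ⟨hi1, hin⟩))
  rw [Equiv.Perm.one_apply]
  omega

lemma not_globallyContains321C_one : ¬GloballyContains321C n 1 := by
  rintro ⟨i, j, k, -, -, -, hij, hjk, h1, -⟩
  simp only [Equiv.Perm.one_apply] at h1
  omega

lemma isWordC_iff (hn : 0 < n) :
    IsWordC n w l ↔ (∀ t ∈ l, t ≤ n) ∧ (l.map (gen n)).prod = w := by
  refine and_congr_right fun hl => ⟨?_, ?_⟩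
  · rintro ⟨σs, h, rfl⟩
    have := List.forall₂_map_left_iff.mpr (h.imp fun _ _ hσ => ((isGenC_iff hn).mp hσ).2.symm)
    rw [List.forall₂_eq_eq_eq] at this
    rw [this]
  · rintro rfl
    exact ⟨_, List.forall₂_map_right_iff.mpr
      (List.forall₂_same.mpr fun t ht => (isGenC_iff hn).mpr ⟨hl t ht, rfl⟩), rfl⟩

lemma lenC_le_length (h : IsWordC n w l) : lenC n w ≤ l.length :=
  Nat.sInf_le ⟨l, h, rfl⟩

lemma exists_isWordC_length_eq_lenC (h : IsWordC n w l) :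
    ∃ l₀, IsWordC n w l₀ ∧ l₀.length = lenC n w :=
  Nat.sInf_mem
    (⟨l.length, l, h, rfl⟩ : {m | ∃ l : List ℕ, IsWordC n w l ∧ l.length = m}.Nonempty)

lemma isAffineSignedPerm_prod_gen (l : List ℕ) : IsAffineSignedPerm n (l.map (gen n)).prod :=
  (affineSignedPermGroup n).list_prod_mem fun _ hσ => by
    obtain ⟨t, -, rfl⟩ := List.mem_map.mp hσ
    exact isAffineSignedPerm_gen n t

lemma disC_prod_gen_le (hn : 0 < n) (hl : ∀ t ∈ l, t ≤ n) :
    disC n (l.map (gen n)).prod ≤ 2 * l.length := by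
  induction l using List.reverseRecOn with
  | nil => simp [disC_one]
  | append_singleton l t ih =>
    simp only [List.forall_mem_append, List.forall_mem_singleton] at hl
    have := disC_mul_gen_le hn hl.2 (isAffineSignedPerm_prod_gen l)
    have := ih hl.1
    simp only [List.map_append, List.map_singleton, List.prod_append, List.prod_singleton,
      List.length_append, List.length_singleton]
    push_cast
    omega

lemma disC_prod_gen_lt (hn : 0 < n) (hl : ∀ t ∈ l, t ≤ n)
    (hc : GloballyContains321C n (l.map (gen n)).prod) :
    disC n (l.map (gen n)).prod < 2 * l.length := by
  induction l using List.reverseRecOn with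
  | nil => exact absurd hc not_globallyContains321C_one
  | append_singleton l t ih =>
    simp only [List.forall_mem_append, List.forall_mem_singleton] at hl
    simp only [List.map_append, List.map_singleton, List.prod_append, List.prod_singleton,
      List.length_append, List.length_singleton] at hc ⊢
    have hv := isAffineSignedPerm_prod_gen (n := n) l
    have hle := disC_prod_gen_le hn hl.1
    have hup := disC_mul_gen_le hn hl.2 hv
    push_cast
    by_cases heq : disC n ((l.map (gen n)).prod * gen n t) = disC n (l.map (gen n)).prod + 2
    · have hdrop : disC n ((l.map (gen n)).prod * gen n t * gen n t) =
          disC n ((l.map (gen n)).prod * gen n t) - 2 := by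
        rw [mul_assoc, gen_mul_self, mul_one]
        omega
      have hcv :=
        globallyContains321C_mul_gen hn hl.2 (hv.mul (isAffineSignedPerm_gen n t)) hc hdrop
      rw [mul_assoc, gen_mul_self, mul_one] at hcv
      have := ih hl.1 hcv
      omega
    · omega

lemma disC_le_of_isWordC (hn : 0 < n) (h : IsWordC n w l) : disC n w ≤ 2 * l.length := by
  obtain ⟨hl, rfl⟩ := (isWordC_iff hn).mp h
  exact disC_prod_gen_le hn hl

lemma disC_lt_of_isWordC (hn : 0 < n) (h : IsWordC n w l) (hc : GloballyContains321C n w) :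
    disC n w < 2 * l.length := by
  obtain ⟨hl, rfl⟩ := (isWordC_iff hn).mp h
  exact disC_prod_gen_lt hn hl hc

lemma exists_isWordC_two_mul_length_eq (hn : 0 < n) (hw : IsAffineSignedPerm n w)
    (hav : ¬GloballyContains321C n w) :
    ∃ l, IsWordC n w l ∧ 2 * (l.length : ℤ) = disC n w := by
  induction hd : (disC n w).toNat using Nat.strong_induction_on generalizing w with
  | _ m ih =>
    by_cases hne : w = 1
    · subst hne
      exact ⟨[], (isWordC_iff hn).mpr ⟨by simp, rfl⟩, by simp [disC_one]⟩
    obtain ⟨t, ht, hdrop⟩ := exists_disC_mul_gen_eq_sub_two hn hw hav hne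
    have := disC_nonneg n (w * gen n t)
    obtain ⟨l, hl, hlen⟩ := ih _ (by omega)
      (hw.mul (isAffineSignedPerm_gen n t))
      (not_globallyContains321C_mul_gen hn ht hw hav hdrop) rfl
    obtain ⟨hlt, hprod⟩ := (isWordC_iff hn).mp hl
    refine ⟨l ++ [t],
      (isWordC_iff hn).mpr ⟨List.forall_mem_append.mpr ⟨hlt, by simpa using ht⟩, ?_⟩, ?_⟩
    · rw [List.map_append, List.prod_append, hprod, List.map_singleton, List.prod_singleton,
        mul_assoc, gen_mul_self, mul_one]
    · rw [List.length_append, List.length_singleton]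
      push_cast
      omega

end Words

theorem stmt_9 (n : ℕ) (hn : 2 ≤ n) (w : Equiv.Perm ℤ)
    (hw : IsAffineSignedPerm n w) :
    disC n w = 2 * (lenC n w : ℤ) ↔ ¬ GloballyContains321C n w := by
  have hn : 0 < n := by omega
  constructor
  · intro heq hc
    by_cases hword : ∃ l, IsWordC n w l
    · obtain ⟨l, hl⟩ := hword
      obtain ⟨l₀, hl₀, hlen₀⟩ := exists_isWordC_length_eq_lenC hl
      have := disC_lt_of_isWordC hn hl₀ hc
      omega
    · have hlen : lenC n w = 0 := by
        rw [lenC, Nat.sInf_eq_zero]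
        exact Or.inr (Set.eq_empty_of_forall_notMem fun m ⟨l, hl, _⟩ => hword ⟨l, hl⟩)
      rw [hlen, Nat.cast_zero, mul_zero] at heq
      exact not_globallyContains321C_one (eq_one_of_disC_eq_zero hw heq ▸ hc)
  · intro hav
    obtain ⟨l, hl, hlen⟩ := exists_isWordC_two_mul_length_eq hn hw hav
    obtain ⟨l₀, hl₀, hlen₀⟩ := exists_isWordC_length_eq_lenC hl
    have := disC_le_of_isWordC hn hl₀
    have := lenC_le_length hl
    omega

end Stmt9
end

section
/- Let n ≥ 2 and let w be an element of the affine signed permutation group 𝑆̃^C_n. Then no reduced word for w contains three consecutive letters i (i±1) i for some i ∈ {1,…,n−1} if and only if in every reduced word for w, for every i ∈ {1,…,n−1}, any two occurrences of the letter i are separated by at least one occurrence of the letter i−1 and at least one occurrence of the letter i+1. -/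
/-
Far-apart generators `sₐ`, `s_b` (`|a - b| ≥ 2`) commute, since they move disjoint sets of
integers (an affine signed permutation is determined by its window values through its
symmetries), and `sₐ sₐ = 1`.

Suppose two occurrences of `j` in a reduced word are not separated by a neighbour `j'` of `j`,
and look at the occurrences of the other neighbour `c` between them. If there is none, the two
copies of `j` commute next to each other and cancel, contradicting reducedness. If there is
exactly one, commuting produces the factor `j c j`. Otherwise two consecutive copies of `c` are
not separated by `j`, and we recurse on this shorter gap. Conversely, a factor `i (i ± 1) i`
shows two occurrences of `i` separated by only one of its neighbours.
-/

namespace Stmt11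

/-- `w` is an element of the affine signed permutation group `𝑆̃^C_n`:
a bijection of `ℤ` with `w(-i) = -w(i)` and `w(2(n+1) - i) = 2(n+1) - w(i)`
for all `i ∈ ℤ`. -/
def IsAffineSignedPerm (n : ℕ) (w : Equiv.Perm ℤ) : Prop :=
  (∀ i : ℤ, w (-i) = -(w i)) ∧
    ∀ i : ℤ, w (2 * ((n : ℤ) + 1) - i) = 2 * ((n : ℤ) + 1) - w i

/-- `σ` is the Coxeter generator `sᵢ` of `𝑆̃^C_n`: the unique element of the
group determined on the window `{1, …, n}` by: for `1 ≤ i ≤ n-1`, `sᵢ`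
interchanges `i` and `i+1` and fixes every other element of the window;
`s₀` sends `1` to `-1` and fixes `{2, …, n}`; `s_n` sends `n` to `n+2` and
fixes `{1, …, n-1}`. -/
def IsGenC (n : ℕ) (i : ℕ) (σ : Equiv.Perm ℤ) : Prop :=
  IsAffineSignedPerm n σ ∧
    if i = 0 then
      σ 1 = -1 ∧ ∀ j : ℤ, 2 ≤ j → j ≤ (n : ℤ) → σ j = j
    else if i = n then
      σ (n : ℤ) = (n : ℤ) + 2 ∧ ∀ j : ℤ, 1 ≤ j → j ≤ (n : ℤ) - 1 → σ j = j
    else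
      i < n ∧ σ (i : ℤ) = (i : ℤ) + 1 ∧ σ ((i : ℤ) + 1) = (i : ℤ) ∧
        ∀ j : ℤ, 1 ≤ j → j ≤ (n : ℤ) → j ≠ (i : ℤ) → j ≠ (i : ℤ) + 1 → σ j = j

/-- `l` is a word for `w` in the letters `{0, …, n}`:
`w = s_{i₁} ⋯ s_{i_ℓ}` where `l = [i₁, …, i_ℓ]`. -/
def IsWordC (n : ℕ) (w : Equiv.Perm ℤ) (l : List ℕ) : Prop :=
  (∀ i ∈ l, i ≤ n) ∧
    ∃ σs : List (Equiv.Perm ℤ), List.Forall₂ (IsGenC n) l σs ∧ σs.prod = w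

/-- The Coxeter length of `w`: the minimal length of a word for `w`. -/
noncomputable def lenC (n : ℕ) (w : Equiv.Perm ℤ) : ℕ :=
  sInf {m | ∃ l : List ℕ, IsWordC n w l ∧ l.length = m}

/-- The disarray `dis(w) = ∑_{i=1}^n |w(i) - i|`. -/
noncomputable def disC (n : ℕ) (w : Equiv.Perm ℤ) : ℤ :=
  ∑ i ∈ Finset.Icc (1 : ℤ) (n : ℤ), |w i - i|

/-- The unfrozen integers for `𝑆̃^C_n` are those that are not multiples of `n + 1`. -/
def UnfrozenC (n : ℕ) (i : ℤ) : Prop := ¬ ((n : ℤ) + 1 ∣ i)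

/-- `w` globally contains the pattern `321`: there are unfrozen integers
`i < j < k` with `w(i) > w(j) > w(k)`. -/
def GloballyContains321C (n : ℕ) (w : Equiv.Perm ℤ) : Prop :=
  ∃ i j k : ℤ, UnfrozenC n i ∧ UnfrozenC n j ∧ UnfrozenC n k ∧
    i < j ∧ j < k ∧ w i > w j ∧ w j > w k

/-- `l` is a reduced word for `w`. -/
def IsReducedWordC (n : ℕ) (w : Equiv.Perm ℤ) (l : List ℕ) : Prop :=
  IsWordC n w l ∧ l.length = lenC n w

/-- `l` contains three consecutive letters of the form `i (i±1) i` for some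
`i ∈ {1, …, n-1}`. -/
def HasBadFactorC (n : ℕ) (l : List ℕ) : Prop :=
  ∃ i j : ℕ, 1 ≤ i ∧ i + 1 ≤ n ∧ (j = i + 1 ∨ i = j + 1) ∧ [i, j, i] <:+: l

/-- In `l`, for every `i ∈ {1, …, n-1}`, any two occurrences of the letter `i`
are separated by at least one occurrence of the letter `i-1` and at least one
occurrence of the letter `i+1`. -/
def SeparatedOccurrencesC (n : ℕ) (l : List ℕ) : Prop :=
  ∀ i : ℕ, 1 ≤ i → i + 1 ≤ n →
    ∀ p q : Fin l.length, p < q → l.get p = i → l.get q = i →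
      (∃ r : Fin l.length, p < r ∧ r < q ∧ l.get r + 1 = i) ∧
      (∃ r : Fin l.length, p < r ∧ r < q ∧ l.get r = i + 1)

end Stmt11

namespace List

variable {α : Type*} {l : List α} {i : α} {P : α → Prop}

lemma eq_take_append_cons_drop_take {p q : ℕ} (hpq : p < q) (hq : q < l.length) :
    l = l.take p ++ l[p] :: ((l.take q).drop (p + 1) ++ l[q] :: l.drop (q + 1)) := by
  have htake : l.take q = l.take p ++ l[p] :: (l.take q).drop (p + 1) := by
    calc l.take q = (l.take q).take (p + 1) ++ (l.take q).drop (p + 1) :=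
          (take_append_drop _ _).symm
      _ = _ := by
          rw [take_take, min_eq_left (by omega), take_add_one,
            getElem?_eq_getElem (by omega), Option.toList_some, append_assoc,
            singleton_append]
  calc l = l.take q ++ l.drop q := (take_append_drop _ _).symm
    _ = (l.take p ++ l[p] :: (l.take q).drop (p + 1)) ++ l[q] :: l.drop (q + 1) := by
      rw [← htake, drop_eq_getElem_cons hq]
    _ = _ := by simp

lemma mem_drop_take_iff {p q : ℕ} {c : α} (hq : q ≤ l.length) :
    c ∈ (l.take q).drop (p + 1) ↔ ∃ (r : ℕ) (hr : r < l.length), p < r ∧ r < q ∧ l[r] = c := by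
  simp only [mem_iff_getElem, getElem_drop, getElem_take, length_drop,
    length_take]
  constructor
  · rintro ⟨k, hk, rfl⟩
    exact ⟨p + 1 + k, by omega, by omega, by omega, rfl⟩
  · rintro ⟨r, hr, hpr, hrq, rfl⟩
    exact ⟨r - (p + 1), by omega, by congr 1; omega⟩

lemma forall_exists_get_between_iff :
    (∀ p q : Fin l.length, p < q → l.get p = i → l.get q = i →
      ∃ r : Fin l.length, p < r ∧ r < q ∧ P (l.get r)) ↔
    ∀ A M B, l = A ++ i :: (M ++ i :: B) → ∃ c ∈ M, P c := by
  constructor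
  · rintro h A M B rfl
    have hq : A.length + (M.length + 1) < (A ++ i :: (M ++ i :: B)).length := by simp
    obtain ⟨⟨r, hr⟩, hpr, hrq, hPr⟩ := h ⟨A.length, by simp⟩ ⟨_, hq⟩ (by simp [Fin.lt_def])
      (by simp) (by simp [getElem_append_right])
    refine ⟨_, ?_, hPr⟩
    have hM : ((A ++ i :: (M ++ i :: B)).take (A.length + (M.length + 1))).drop
        (A.length + 1) = M := by
      rw [take_length_add_append]; simp
    have hmem : (A ++ i :: (M ++ i :: B))[r] ∈ _ :=
      (mem_drop_take_iff (p := A.length) hq.le).2 ⟨r, hr, hpr, hrq, rfl⟩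
    rwa [hM] at hmem
  · intro h p q hpq hp hq
    have hsplit := eq_take_append_cons_drop_take (l := l) hpq q.2
    simp only [get_eq_getElem] at hp hq
    rw [hp, hq] at hsplit
    obtain ⟨c, hc, hPc⟩ := h _ _ _ hsplit
    obtain ⟨r, hr, hpr, hrq, rfl⟩ := (mem_drop_take_iff q.2.le).1 hc
    exact ⟨⟨r, hr⟩, hpr, hrq, hPc⟩

end List

namespace Stmt11

namespace IsAffineSignedPerm

variable {n : ℕ} {σ τ : Equiv.Perm ℤ}

lemma one : IsAffineSignedPerm n 1 := ⟨fun _ => rfl, fun _ => rfl⟩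

lemma mul (hσ : IsAffineSignedPerm n σ) (hτ : IsAffineSignedPerm n τ) :
    IsAffineSignedPerm n (σ * τ) :=
  ⟨fun i => by simp only [Equiv.Perm.mul_apply, hτ.1, hσ.1],
    fun i => by simp only [Equiv.Perm.mul_apply, hτ.2, hσ.2]⟩

lemma apply_add_two_mul (hσ : IsAffineSignedPerm n σ) (x : ℤ) :
    σ (x + 2 * (n + 1)) = σ x + 2 * (n + 1) := by
  have := hσ.2 (-x)
  rw [sub_neg_eq_add, add_comm, hσ.1] at this
  omega

lemma apply_add_two_mul_mul (hσ : IsAffineSignedPerm n σ) (x k : ℤ) :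
    σ (x + 2 * (n + 1) * k) = σ x + 2 * (n + 1) * k := by
  have hc : Commute σ (Equiv.addRight (2 * ((n : ℤ) + 1))) :=
    Equiv.ext (hσ.apply_add_two_mul ·)
  have := congrArg (· x) (hc.zpow_right k).eq
  simpa [Equiv.Perm.mul_apply, mul_comm] using this

lemma apply_neg_add_two_mul_mul (hσ : IsAffineSignedPerm n σ) (x k : ℤ) :
    σ (-x + 2 * (n + 1) * k) = -σ x + 2 * (n + 1) * k := by
  rw [hσ.apply_add_two_mul_mul, hσ.1]

lemma apply_zero (hσ : IsAffineSignedPerm n σ) : σ 0 = 0 := by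
  have := hσ.1 0
  simp only [neg_zero] at this
  omega

lemma apply_natCast_add_one (hσ : IsAffineSignedPerm n σ) : σ (n + 1) = n + 1 := by
  have := hσ.2 (n + 1)
  rw [show 2 * ((n : ℤ) + 1) - (n + 1) = n + 1 by ring] at this
  omega

lemma exists_eq_add_two_mul_mul (n : ℕ) (x : ℤ) : ∃ r k : ℤ, 0 ≤ r ∧ r ≤ n + 1 ∧
    (x = r + 2 * (n + 1) * k ∨ x = -r + 2 * (n + 1) * k) := by
  have hm : (0 : ℤ) < 2 * (n + 1) := by positivity
  have hdiv := Int.emod_add_mul_ediv x (2 * (n + 1))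
  have h0 := Int.emod_nonneg x hm.ne'
  have h1 := Int.emod_lt_of_pos x hm
  by_cases hr : x % (2 * (n + 1)) ≤ n + 1
  · exact ⟨_, _, h0, hr, Or.inl hdiv.symm⟩
  · refine ⟨2 * (n + 1) - x % (2 * (n + 1)), x / (2 * (n + 1)) + 1, by omega, by omega,
      Or.inr ?_⟩
    linear_combination -hdiv

lemma ext_of_window (hσ : IsAffineSignedPerm n σ) (hτ : IsAffineSignedPerm n τ)
    (h : ∀ j : ℤ, 1 ≤ j → j ≤ n → σ j = τ j) : σ = τ := by
  have hr : ∀ r : ℤ, 0 ≤ r → r ≤ n + 1 → σ r = τ r := by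
    intro r hr0 hr1
    rcases hr0.eq_or_lt with rfl | hr0
    · rw [hσ.apply_zero, hτ.apply_zero]
    rcases hr1.eq_or_lt with rfl | hr1
    · rw [hσ.apply_natCast_add_one, hτ.apply_natCast_add_one]
    exact h r hr0 (by omega)
  ext x
  obtain ⟨r, k, hr0, hr1, rfl | rfl⟩ := exists_eq_add_two_mul_mul n x
  · rw [hσ.apply_add_two_mul_mul, hτ.apply_add_two_mul_mul, hr r hr0 hr1]
  · rw [hσ.apply_neg_add_two_mul_mul, hτ.apply_neg_add_two_mul_mul, hr r hr0 hr1]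

lemma disjoint_of_window (hσ : IsAffineSignedPerm n σ) (hτ : IsAffineSignedPerm n τ)
    (h : ∀ j : ℤ, 1 ≤ j → j ≤ n → σ j = j ∨ τ j = j) : σ.Disjoint τ := by
  have hr : ∀ r : ℤ, 0 ≤ r → r ≤ n + 1 → σ r = r ∨ τ r = r := by
    intro r hr0 hr1
    rcases hr0.eq_or_lt with rfl | hr0
    · exact Or.inl hσ.apply_zero
    rcases hr1.eq_or_lt with rfl | hr1
    · exact Or.inl hσ.apply_natCast_add_one
    exact h r hr0 (by omega)
  intro x
  obtain ⟨r, k, hr0, hr1, rfl | rfl⟩ := exists_eq_add_two_mul_mul n x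
  · rw [hσ.apply_add_two_mul_mul, hτ.apply_add_two_mul_mul]
    rcases hr r hr0 hr1 with h' | h' <;> simp [h']
  · rw [hσ.apply_neg_add_two_mul_mul, hτ.apply_neg_add_two_mul_mul]
    rcases hr r hr0 hr1 with h' | h' <;> simp [h']

end IsAffineSignedPerm

namespace IsGenC

variable {n a b : ℕ} {σ τ : Equiv.Perm ℤ}

lemma le (h : IsGenC n a σ) : a ≤ n := by
  obtain ⟨-, h⟩ := h
  split_ifs at h with h0 hn
  exacts [by omega, hn.le, h.1.le]

lemma apply_of_ne (h : IsGenC n a σ) {j : ℤ} (hj1 : 1 ≤ j) (hjn : j ≤ n) (hja : j ≠ a)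
    (hja1 : j ≠ a + 1) : σ j = j := by
  obtain ⟨-, h⟩ := h
  split_ifs at h with h0 hn
  · subst h0
    exact h.2 j (by omega) hjn
  · subst hn
    exact h.2 j hj1 (by omega)
  · exact h.2.2.2 j hj1 hjn hja hja1

lemma mul_eq_one (hσ : IsGenC n a σ) (hτ : IsGenC n a τ) : σ * τ = 1 := by
  refine hσ.1.mul hτ.1 |>.ext_of_window .one fun j hj1 hjn => ?_
  rw [Equiv.Perm.mul_apply, Equiv.Perm.one_apply]
  obtain ⟨hσ', hσ⟩ := hσ
  obtain ⟨-, hτ⟩ := hτ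
  split_ifs at hσ hτ with h0 hn
  · rcases hj1.eq_or_lt with rfl | hj1
    · rw [hτ.1, hσ'.1, hσ.1, neg_neg]
    · rw [hτ.2 j hj1 hjn, hσ.2 j hj1 hjn]
  · subst hn
    rcases hjn.eq_or_lt with rfl | hjn
    · have := hσ'.2 a
      rw [hτ.1, show (a : ℤ) + 2 = 2 * (a + 1) - a by ring, this, hσ.1]
      ring
    · rw [hτ.2 j hj1 (by omega), hσ.2 j hj1 (by omega)]
  · by_cases hja : j = a
    · rw [hja, hτ.2.1, hσ.2.2.1]
    by_cases hja1 : j = a + 1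
    · rw [hja1, hτ.2.2.1, hσ.2.1]
    rw [hτ.2.2.2 j hj1 hjn hja hja1, hσ.2.2.2 j hj1 hjn hja hja1]

lemma commute (hσ : IsGenC n a σ) (hτ : IsGenC n b τ) (hab : a + 2 ≤ b ∨ b + 2 ≤ a) :
    Commute σ τ := by
  refine Equiv.Perm.Disjoint.commute (hσ.1.disjoint_of_window hτ.1 fun j hj1 hjn => ?_)
  by_cases hja : j = a ∨ j = a + 1
  · exact Or.inr (hτ.apply_of_ne hj1 hjn (by omega) (by omega))
  · exact Or.inl (hσ.apply_of_ne hj1 hjn (by omega) (by omega))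

end IsGenC

namespace IsWordC

variable {n a b : ℕ} {w : Equiv.Perm ℤ} {l A B X Y M : List ℕ}

lemma nil_iff : IsWordC n w [] ↔ w = 1 := by
  simp [IsWordC, eq_comm]

lemma cons_iff :
    IsWordC n w (a :: l) ↔ ∃ σ v, IsGenC n a σ ∧ IsWordC n v l ∧ w = σ * v := by
  constructor
  · rintro ⟨hle, σs, hσs, rfl⟩
    obtain ⟨σ, τs, hσ, hτs, rfl⟩ := List.forall₂_cons_left_iff.1 hσs
    exact ⟨σ, τs.prod, hσ, ⟨fun i hi => hle i (.tail a hi), τs, hτs, rfl⟩, List.prod_cons⟩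
  · rintro ⟨σ, v, hσ, ⟨hle, σs, hσs, rfl⟩, rfl⟩
    refine ⟨?_, σ :: σs, .cons hσ hσs, List.prod_cons.symm⟩
    simpa [hσ.le] using hle

lemma append_iff :
    IsWordC n w (A ++ B) ↔ ∃ u v, IsWordC n u A ∧ IsWordC n v B ∧ w = u * v := by
  induction A generalizing w with
  | nil => simp [nil_iff]
  | cons a A ih =>
    simp only [List.cons_append, cons_iff, ih]
    constructor
    · rintro ⟨σ, _, hσ, ⟨u, v, hu, hv, rfl⟩, rfl⟩
      exact ⟨σ * u, v, ⟨σ, u, hσ, hu, rfl⟩, hv, (mul_assoc _ _ _).symm⟩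
    · rintro ⟨_, v, ⟨σ, u, hσ, hu, rfl⟩, hv, rfl⟩
      exact ⟨σ, u * v, hσ, ⟨u, v, hu, hv, rfl⟩, mul_assoc _ _ _⟩

lemma replace_infix (hXY : ∀ u, IsWordC n u X → IsWordC n u Y)
    (h : IsWordC n w (A ++ X ++ B)) : IsWordC n w (A ++ Y ++ B) := by
  obtain ⟨_, v, hAX, hv, rfl⟩ := append_iff.1 h
  obtain ⟨u, x, hu, hx, rfl⟩ := append_iff.1 hAX
  exact append_iff.2 ⟨u * x, v, append_iff.2 ⟨u, x, hu, hXY x hx, rfl⟩, hv, rfl⟩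

lemma swap (hab : a + 2 ≤ b ∨ b + 2 ≤ a) (h : IsWordC n w (A ++ a :: b :: B)) :
    IsWordC n w (A ++ b :: a :: B) := by
  have hswap : ∀ u, IsWordC n u [a, b] → IsWordC n u [b, a] := by
    simp only [cons_iff, nil_iff]
    rintro _ ⟨σ, _, hσ, ⟨τ, _, hτ, rfl, rfl⟩, rfl⟩
    exact ⟨τ, _, hτ, ⟨σ, _, hσ, rfl, rfl⟩, by simp only [mul_one, (hσ.commute hτ hab).eq]⟩
  simpa using replace_infix (A := A) (B := B) hswap (by simpa using h)

lemma cancel (h : IsWordC n w (A ++ a :: a :: B)) : IsWordC n w (A ++ B) := by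
  have hcancel : ∀ u, IsWordC n u [a, a] → IsWordC n u [] := by
    simp only [cons_iff, nil_iff]
    rintro _ ⟨σ, _, hσ, ⟨τ, _, hτ, rfl, rfl⟩, rfl⟩
    rw [mul_one, hσ.mul_eq_one hτ]
  simpa using replace_infix (A := A) (B := B) hcancel (by simpa using h)

lemma move_iff (hM : ∀ c ∈ M, c + 2 ≤ a ∨ a + 2 ≤ c) :
    IsWordC n w (A ++ a :: (M ++ B)) ↔ IsWordC n w (A ++ M ++ a :: B) := by
  induction M generalizing A with
  | nil => simp
  | cons c M ih =>
    have hc := hM c (List.mem_cons_self ..)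
    calc IsWordC n w (A ++ a :: c :: (M ++ B))
        ↔ IsWordC n w ((A ++ [c]) ++ a :: (M ++ B)) := by
          simpa using ⟨swap hc.symm, swap hc⟩
      _ ↔ IsWordC n w (A ++ c :: M ++ a :: B) := by
          simpa using ih (fun x hx => hM x (.tail c hx)) (A := A ++ [c])

lemma lenC_le (h : IsWordC n w l) : lenC n w ≤ l.length :=
  Nat.sInf_le ⟨l, h, rfl⟩

end IsWordC

lemma separatedOccurrencesC_iff {n : ℕ} {l : List ℕ} :
    SeparatedOccurrencesC n l ↔ ∀ i, 1 ≤ i → i + 1 ≤ n → ∀ A M B,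
      l = A ++ i :: (M ++ i :: B) → (∃ c ∈ M, c + 1 = i) ∧ i + 1 ∈ M := by
  refine forall_congr' fun i => imp_congr_right fun _ => imp_congr_right fun _ => ?_
  simp only [imp_and, forall_and]
  rw [List.forall_exists_get_between_iff (P := (· + 1 = i)),
    List.forall_exists_get_between_iff (P := (· = i + 1))]
  simp

namespace IsReducedWordC

variable {n : ℕ} {w : Equiv.Perm ℤ} {l l' : List ℕ}

lemma of_isWordC (h : IsReducedWordC n w l) (h' : IsWordC n w l') (hlen : l'.length = l.length) :
    IsReducedWordC n w l' :=
  ⟨h', hlen.trans h.2⟩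

lemma exists_mem_near {j : ℕ} {A M B : List ℕ}
    (hred : IsReducedWordC n w (A ++ j :: (M ++ j :: B))) :
    ∃ c ∈ M, j ≤ c + 1 ∧ c ≤ j + 1 := by
  by_contra! hnear
  have hfar : ∀ x ∈ M, x + 2 ≤ j ∨ j + 2 ≤ x := fun x hx => by
    have := hnear x hx; omega
  have hword : IsWordC n w (A ++ (M ++ B)) := by
    refine IsWordC.cancel (a := j) ?_
    have := (IsWordC.move_iff (A := A ++ [j]) (B := B) hfar).2 (by simpa using hred.1)
    simpa using this
  have hlen := hred.2
  have := hword.lenC_le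
  simp only [List.length_append, List.length_cons] at this hlen
  omega

theorem exists_hasBadFactorC {j j' : ℕ} {A M B : List ℕ}
    (hred : IsReducedWordC n w (A ++ j :: (M ++ j :: B)))
    (hadj : j' + 1 = j ∨ j + 1 = j') (hj' : j' ≤ n) (hj'M : j' ∉ M) :
    ∃ l, IsReducedWordC n w l ∧ HasBadFactorC n l := by
  by_cases hjM : j ∈ M
  · obtain ⟨M1, M2, rfl, -⟩ := List.append_of_mem hjM
    exact exists_hasBadFactorC (M := M1) (B := M2 ++ j :: B) (by simpa using hred) hadj hj'
      (fun h => hj'M (by simp [h]))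
  obtain ⟨c, hcM, hc⟩ := hred.exists_mem_near
  have hcj : c ≠ j := fun h => hjM (h ▸ hcM)
  have hcj' : c ≠ j' := fun h => hj'M (h ▸ hcM)
  obtain ⟨M1, M2, rfl, hcM1⟩ := List.eq_append_cons_of_mem hcM
  by_cases hcM2 : c ∈ M2
  · obtain ⟨M2a, M2b, rfl, -⟩ := List.append_of_mem hcM2
    exact exists_hasBadFactorC (j := c) (A := A ++ j :: M1) (M := M2a) (B := M2b ++ j :: B)
      (by simpa using hred) (by omega) (hred.1.1 j (by simp)) (fun h => hjM (by simp [h]))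
  have hcn : c ≤ n := hred.1.1 c (by simp)
  -- the only neighbours of `j` are `j'` and `c`, and neither occurs in `M1 ++ M2`
  have hfar : ∀ x ∈ M1 ++ M2, x + 2 ≤ j ∨ j + 2 ≤ x := by
    intro x hx
    have hxj : x ≠ j := fun h => hjM (by simp_all)
    have hxj' : x ≠ j' := fun h => hj'M (by simp_all)
    have hxc : x ≠ c := by rintro rfl; simp_all
    omega
  have hword : IsWordC n w (A ++ M1 ++ j :: c :: j :: (M2 ++ B)) := by
    have h1 := (IsWordC.move_iff (A := A) (M := M1) (B := c :: (M2 ++ j :: B))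
      fun x hx => hfar x (by simp [hx])).1 (by simpa using hred.1)
    have h2 := (IsWordC.move_iff (A := A ++ M1 ++ [j, c]) (M := M2) (B := B)
      fun x hx => hfar x (by simp [hx])).2 (by simpa using h1)
    simpa using h2
  exact ⟨_, hred.of_isWordC hword (by simp; omega),
    j, c, by omega, by omega, by omega, A ++ M1, M2 ++ B, by simp⟩
termination_by M.length

end IsReducedWordC

theorem stmt_11_general (n : ℕ) (w : Equiv.Perm ℤ) :
    (∀ l : List ℕ, IsReducedWordC n w l → ¬ HasBadFactorC n l) ↔
      ∀ l : List ℕ, IsReducedWordC n w l → SeparatedOccurrencesC n l := by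
  constructor
  · intro hnobad l hl
    rw [separatedOccurrencesC_iff]
    rintro i hi1 hin A M B rfl
    by_contra hsep
    obtain ⟨j', hadj, hj', hj'M⟩ : ∃ j', (j' + 1 = i ∨ i + 1 = j') ∧ j' ≤ n ∧ j' ∉ M := by
      rcases not_and_or.1 hsep with h | h
      · exact ⟨i - 1, by omega, by omega, fun hm => h ⟨_, hm, by omega⟩⟩
      · exact ⟨i + 1, Or.inr rfl, hin, h⟩
    obtain ⟨l, hl, hbad⟩ := hl.exists_hasBadFactorC hadj hj' hj'M
    exact hnobad l hl hbad
  · rintro hsep l hl ⟨i, j, hi1, hin, hij, S, T, rfl⟩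
    obtain ⟨⟨c, hc, hci⟩, hi⟩ :=
      separatedOccurrencesC_iff.1 (hsep _ hl) i hi1 hin S [j] T (by simp)
    simp only [List.mem_singleton] at hc hi
    omega

theorem stmt_11 (n : ℕ) (hn : 2 ≤ n) (w : Equiv.Perm ℤ)
    (hw : IsAffineSignedPerm n w) :
    (∀ l : List ℕ, IsReducedWordC n w l → ¬ HasBadFactorC n l) ↔
      ∀ l : List ℕ, IsReducedWordC n w l → SeparatedOccurrencesC n l :=
  stmt_11_general n w

end Stmt11
end

section
/- Let n ≥ 1 and let w ∈ S^B_n be a signed permutation. If w globally avoids the pattern 321, then dis(w)/2 = ℓ(w). -/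
namespace Stmt13

/-- The Coxeter generator `sᵢ` of the hyperoctahedral group, acting on `ℤ`:
`s₀` swaps `-1` and `1`; for `i ≥ 1`, `sᵢ` swaps `i` with `i+1` and `-i` with `-(i+1)`. -/
def sB (i : ℕ) : Equiv.Perm ℤ :=
  if i = 0 then Equiv.swap (-1 : ℤ) 1
  else Equiv.swap (i : ℤ) ((i : ℤ) + 1) * Equiv.swap (-(i : ℤ)) (-((i : ℤ) + 1))

/-- `w` is a signed permutation in `S^B_n`: a bijection of `ℤ` with
`w(-i) = -w(i)` for all `i` and `w(i) = i` whenever `|i| > n`. -/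
def IsSignedPerm (n : ℕ) (w : Equiv.Perm ℤ) : Prop :=
  (∀ i : ℤ, w (-i) = -(w i)) ∧ ∀ i : ℤ, (n : ℤ) < |i| → w i = i

/-- `l` is a word for `w` in the letters `{0, …, n-1}`. -/
def IsWordB (n : ℕ) (w : Equiv.Perm ℤ) (l : List ℕ) : Prop :=
  (∀ i ∈ l, i + 1 ≤ n) ∧ (l.map sB).prod = w

/-- The Coxeter length of `w`: the minimal length of a word for `w`. -/
noncomputable def lenB (n : ℕ) (w : Equiv.Perm ℤ) : ℕ :=
  sInf {m | ∃ l : List ℕ, IsWordB n w l ∧ l.length = m}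

/-- The disarray `dis(w) = ∑_{i=1}^n |w(i) - i|`. -/
noncomputable def disB (n : ℕ) (w : Equiv.Perm ℤ) : ℤ :=
  ∑ i ∈ Finset.Icc (1 : ℤ) (n : ℤ), |w i - i|

/-- The unfrozen integers for `S^B_n` are `{-n, …, -1, 1, …, n}`. -/
def Unfrozen (n : ℕ) (i : ℤ) : Prop := i ≠ 0 ∧ |i| ≤ (n : ℤ)

/-- `w` globally contains the pattern `321`: there are unfrozen integers
`i < j < k` with `w(i) > w(j) > w(k)`. -/
def GloballyContains321 (n : ℕ) (w : Equiv.Perm ℤ) : Prop :=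
  ∃ i j k : ℤ, Unfrozen n i ∧ Unfrozen n j ∧ Unfrozen n k ∧
    i < j ∧ j < k ∧ w i > w j ∧ w j > w k

/-!
Right multiplication by a generator `sᵢ` only moves the entries in positions `i, i + 1` (or `±1`),
so it changes the disarray by at most `2`; hence `dis(w) ≤ 2ℓ(w)` for every signed permutation.
Conversely, a 321-avoiding `w ≠ 1` has a right descent at which the disarray drops by exactly `2`:
either `w(1) < 0`, or, for the largest `I` with `w(I) > I`, one has `w(I + 1) ≤ I`, since otherwise
`I` together with the first point `j > I` not fixed by `w` and its predecessor `j - 1` form a 321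
pattern. Removing a descent preserves 321-avoidance, so induction on the disarray produces a word
of length `dis(w) / 2`.
-/

section Generators

lemma sB_apply (i : ℕ) (x : ℤ) : sB i x =
    if i = 0 then (if x = -1 then 1 else if x = 1 then -1 else x)
    else (if x = i then i + 1 else if x = i + 1 then i
      else if x = -i then -i - 1 else if x = -i - 1 then -i else x) := by
  by_cases h : i = 0
  · simp only [sB, h, reduceIte, Equiv.swap_apply_def]
  · simp only [sB, h, reduceIte, Equiv.Perm.mul_apply, Equiv.swap_apply_def]
    split_ifs <;> omega

lemma sB_neg (i : ℕ) (x : ℤ) : sB i (-x) = -sB i x := by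
  simp only [sB_apply]
  split_ifs <;> omega

lemma sB_mul_self (i : ℕ) : sB i * sB i = 1 := by
  ext x
  simp only [Equiv.Perm.mul_apply, Equiv.Perm.one_apply, sB_apply]
  split_ifs <;> first | contradiction | omega

lemma sB_apply_of_lt_abs {i n : ℕ} (hi : i + 1 ≤ n) {x : ℤ} (hx : n < |x|) : sB i x = x := by
  rw [lt_abs] at hx
  simp only [sB_apply]
  split_ifs <;> omega

lemma Unfrozen.sB {n : ℕ} {x : ℤ} (hx : Unfrozen n x) {i : ℕ} (hi : i + 1 ≤ n) :
    Unfrozen n (sB i x) := by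
  rw [Unfrozen, abs_le] at hx ⊢
  simp only [sB_apply]
  split_ifs <;> omega

lemma sB_lt_sB_or_swap (i : ℕ) {x y : ℤ} (hx : x ≠ 0) (hy : y ≠ 0) (hxy : x < y) :
    sB i x < sB i y ∨ sB i x = y ∧ sB i y = x := by
  simp only [sB_apply]
  split_ifs <;> omega

end Generators

section SignedPerm

variable {n : ℕ} {v w : Equiv.Perm ℤ}

lemma isSignedPerm_sB {i : ℕ} (hi : i + 1 ≤ n) : IsSignedPerm n (sB i) :=
  ⟨sB_neg i, fun _ hx ↦ sB_apply_of_lt_abs hi hx⟩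

lemma IsSignedPerm.mul (hv : IsSignedPerm n v) (hw : IsSignedPerm n w) :
    IsSignedPerm n (v * w) := by
  refine ⟨fun x ↦ ?_, fun x hx ↦ ?_⟩
  · rw [Equiv.Perm.mul_apply, Equiv.Perm.mul_apply, hw.1, hv.1]
  · rw [Equiv.Perm.mul_apply, hw.2 x hx, hv.2 x hx]

lemma IsSignedPerm.prod_map_sB {l : List ℕ} (hl : ∀ i ∈ l, i + 1 ≤ n) :
    IsSignedPerm n (l.map sB).prod :=
  List.prod_induction _ (fun _ _ ↦ IsSignedPerm.mul) ⟨fun _ ↦ rfl, fun _ _ ↦ rfl⟩ (by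
    simp only [List.mem_map]
    rintro _ ⟨i, hi, rfl⟩
    exact isSignedPerm_sB (hl i hi))

lemma IsSignedPerm.apply_zero (hw : IsSignedPerm n w) : w 0 = 0 := by
  have := hw.1 0
  rw [neg_zero] at this
  omega

lemma IsSignedPerm.abs_apply_le (hw : IsSignedPerm n w) {x : ℤ} (hx : |x| ≤ n) :
    |w x| ≤ n := by
  by_contra! h
  have hwx : w x = x := w.injective (hw.2 _ h)
  rw [hwx] at h
  omega

lemma IsSignedPerm.eq_one (hw : IsSignedPerm n w) (h : ∀ p : ℤ, 1 ≤ p → p ≤ n → w p = p) :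
    w = 1 := by
  ext x
  rw [Equiv.Perm.one_apply]
  by_cases hxn : n < |x|
  · exact hw.2 x hxn
  rcases lt_trichotomy x 0 with hx | rfl | hx
  · rw [← neg_neg x, hw.1, h (-x) (by omega) (by rw [abs_of_neg hx] at hxn; omega)]
  · exact hw.apply_zero
  · exact h x hx (by rw [abs_of_pos hx] at hxn; omega)

end SignedPerm

section Disarray

variable {n : ℕ} {w : Equiv.Perm ℤ}

lemma disB_nonneg : 0 ≤ disB n w := Finset.sum_nonneg fun _ _ ↦ abs_nonneg _

@[simp]
lemma disB_one : disB n 1 = 0 := by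
  simp [disB]

lemma disB_mul_sub_disB (σ : Equiv.Perm ℤ) {S : Finset ℤ} (hS : S ⊆ Finset.Icc 1 (n : ℤ))
    (hσ : ∀ p ∈ Finset.Icc 1 (n : ℤ), p ∉ S → σ p = p) :
    disB n (w * σ) - disB n w = ∑ p ∈ S, (|w (σ p) - p| - |w p - p|) := by
  rw [disB, disB, ← Finset.sum_sub_distrib]
  refine (Finset.sum_subset hS fun p hp hpS ↦ ?_).symm
  rw [Equiv.Perm.mul_apply, hσ p hp hpS, sub_self]

lemma disB_mul_sB_zero (hw : IsSignedPerm n w) (hn : 1 ≤ n) :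
    disB n (w * sB 0) = disB n w + (|w 1 + 1| - |w 1 - 1|) := by
  have h := disB_mul_sub_disB (n := n) (w := w) (sB 0) (S := {1})
    (by simpa using hn) fun p hp hp1 ↦ by
      rw [Finset.mem_Icc] at hp
      rw [Finset.mem_singleton] at hp1
      simp only [sB_apply]
      split_ifs <;> omega
  have hw1 : w (sB 0 1) = -w 1 := by
    rw [show sB 0 1 = -1 by decide, hw.1]
  rw [Finset.sum_singleton, hw1, show -w 1 - 1 = -(w 1 + 1) by ring, abs_neg] at h
  linarith

lemma disB_mul_sB {i : ℕ} (hi : 1 ≤ i) (hin : i + 1 ≤ n) :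
    disB n (w * sB i) = disB n w +
      (|w (i + 1) - i| - |w i - i| + (|w i - (i + 1)| - |w (i + 1) - (i + 1)|)) := by
  have h := disB_mul_sub_disB (n := n) (w := w) (sB i) (S := {(i : ℤ), (i : ℤ) + 1})
    (by intro p; simp only [Finset.mem_insert, Finset.mem_singleton, Finset.mem_Icc]; omega)
    fun p hp hpS ↦ by
      simp only [Finset.mem_insert, Finset.mem_singleton, Finset.mem_Icc] at hp hpS
      simp only [sB_apply]
      split_ifs <;> omega
  have hi0 : i ≠ 0 := by omega
  rw [Finset.sum_pair (by omega)] at h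
  simp only [sB_apply, hi0, reduceIte, show (i : ℤ) + 1 ≠ i by omega] at h
  linarith

lemma disB_mul_sB_le (hw : IsSignedPerm n w) {i : ℕ} (hi : i + 1 ≤ n) :
    disB n (w * sB i) ≤ disB n w + 2 := by
  rcases Nat.eq_zero_or_pos i with rfl | hi0
  · rw [disB_mul_sB_zero hw hi, abs_eq_max_neg, abs_eq_max_neg]
    omega
  · rw [disB_mul_sB hi0 hi, abs_eq_max_neg, abs_eq_max_neg, abs_eq_max_neg, abs_eq_max_neg]
    omega

lemma disB_prod_map_sB_le {l : List ℕ} (hl : ∀ i ∈ l, i + 1 ≤ n) :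
    disB n (l.map sB).prod ≤ 2 * l.length := by
  induction l using List.reverseRecOn with
  | nil => simp
  | append_singleton l i ih =>
    simp only [List.mem_append, List.mem_singleton] at hl
    have hw := IsSignedPerm.prod_map_sB fun j hj ↦ hl j (.inl hj)
    rw [List.map_append, List.prod_append, List.map_singleton, List.prod_singleton,
      List.length_append, List.length_singleton]
    have := disB_mul_sB_le hw (hl i (.inr rfl))
    have := ih fun j hj ↦ hl j (.inl hj)
    push_cast
    linarith

lemma lenB_le_length {l : List ℕ} (hl : IsWordB n w l) : lenB n w ≤ l.length :=
  Nat.sInf_le ⟨l, hl, rfl⟩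

lemma disB_le_two_mul_lenB {l : List ℕ} (hl : IsWordB n w l) : disB n w ≤ 2 * lenB n w := by
  obtain ⟨l₀, ⟨hl₀, rfl⟩, hlen⟩ := Nat.sInf_mem (s := {m | ∃ l, IsWordB n w l ∧ l.length = m})
    ⟨l.length, l, hl, rfl⟩
  rw [lenB, ← hlen]
  exact disB_prod_map_sB_le hl₀

end Disarray

section Avoidance

variable {n : ℕ} {w : Equiv.Perm ℤ}

-- For `i = 0` the descent condition `w (i + 1) < w i` reads `w 1 < w 0 = 0`.
lemma apply_lt_apply_of_sB_eq (hw : IsSignedPerm n w) {i : ℕ} (hdesc : w (i + 1) < w i)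
    {x y : ℤ} (hxy : x < y) (hs : sB i x = y) : w y < w x := by
  have hneg_i := hw.1 i
  have hneg_succ : w (-i - 1) = -w (i + 1) := by rw [← hw.1, neg_add']
  rw [sB_apply] at hs
  split_ifs at hs <;> subst_vars
  · have := hw.1 1
    rw [Nat.cast_zero, zero_add, hw.apply_zero] at hdesc
    omega
  all_goals omega

lemma not_globallyContains321_mul_sB (hw : IsSignedPerm n w) {i : ℕ} (hi : i + 1 ≤ n)
    (hdesc : w (i + 1) < w i) (hav : ¬ GloballyContains321 n w) :
    ¬ GloballyContains321 n (w * sB i) := by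
  have hmono : ∀ x y, Unfrozen n x → Unfrozen n y → x < y → w (sB i y) < w (sB i x) →
      sB i x < sB i y := fun x y hx hy hxy hwxy ↦
    (sB_lt_sB_or_swap i hx.1 hy.1 hxy).resolve_right fun ⟨hxy', hyx'⟩ ↦
      (apply_lt_apply_of_sB_eq hw hdesc hxy hxy').not_gt (hxy' ▸ hyx' ▸ hwxy)
  rintro ⟨a, b, c, ha, hb, hc, hab, hbc, hwab, hwbc⟩
  exact hav ⟨sB i a, sB i b, sB i c, ha.sB hi, hb.sB hi, hc.sB hi,
    hmono a b ha hb hab hwab, hmono b c hb hc hbc hwbc, hwab, hwbc⟩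

end Avoidance

section Descent

variable {n : ℕ} {w : Equiv.Perm ℤ}

lemma IsSignedPerm.apply_eq_self_of_abs_lt (hw : IsSignedPerm n w) {j : ℤ}
    (hfix : ∀ m, 1 ≤ m → m < j → w m = m) {x : ℤ} (hx : |x| < j) : w x = x := by
  rcases lt_trichotomy x 0 with hx0 | rfl | hx0
  · rw [abs_of_neg hx0] at hx
    rw [← neg_neg x, hw.1, hfix (-x) (by omega) hx]
  · exact hw.apply_zero
  · rw [abs_of_pos hx0] at hx
    exact hfix x hx0 hx

lemma exists_lt_apply_self (hw : IsSignedPerm n w) (hav : ¬ GloballyContains321 n w)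
    (h1 : 0 < w 1) (hne : w ≠ 1) : ∃ j : ℤ, 1 ≤ j ∧ j ≤ n ∧ j < w j := by
  by_contra! hle
  obtain ⟨j, ⟨hj1, hjn, hjw⟩, hmin⟩ := Int.exists_least_of_bdd
    (P := fun j ↦ 1 ≤ j ∧ j ≤ n ∧ w j ≠ j) ⟨1, fun _ h ↦ h.1⟩ (by
      by_contra! h
      exact hne (hw.eq_one h))
  have hfix : ∀ m, 1 ≤ m → m < j → w m = m := fun m hm1 hmj ↦ by
    by_contra h
    exact (hmin m ⟨hm1, by omega, h⟩).not_gt hmj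
  have hwj_abs : j ≤ |w j| := by
    by_contra! h
    exact hjw (w.injective (hw.apply_eq_self_of_abs_lt hfix h))
  have hwj : w j ≤ -j := by
    have := lt_of_le_of_ne (hle j hj1 hjn) hjw
    rw [le_abs] at hwj_abs
    omega
  have hj_ne_one : j ≠ 1 := by
    rintro rfl
    omega
  have hwj1 := hfix (j - 1) (by omega) (by omega)
  have hwnegj := hw.1 j
  exact hav ⟨-j, j - 1, j, by rw [Unfrozen, abs_le]; omega, by rw [Unfrozen, abs_le]; omega,
    by rw [Unfrozen, abs_le]; omega, by omega, by omega, by omega, by omega⟩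

lemma exists_descent_of_lt_apply_self (hw : IsSignedPerm n w) (hav : ¬ GloballyContains321 n w)
    (hex : ∃ j : ℤ, 1 ≤ j ∧ j ≤ n ∧ j < w j) :
    ∃ i : ℤ, 1 ≤ i ∧ i + 1 ≤ n ∧ i < w i ∧ w (i + 1) ≤ i := by
  obtain ⟨I, ⟨hI1, hIn, hIw⟩, hmax⟩ := Int.exists_greatest_of_bdd
    (P := fun j ↦ 1 ≤ j ∧ j ≤ n ∧ j < w j) ⟨n, fun _ h ↦ h.2.1⟩ hex
  have hle : ∀ m, I < m → m ≤ n → w m ≤ m := fun m hIm hmn ↦ by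
    by_contra! h
    exact (hmax m ⟨by omega, hmn, h⟩).not_gt hIm
  have hwI : w I ≤ n := (abs_le.1 (hw.abs_apply_le (abs_le.2 ⟨by omega, hIn⟩))).2
  obtain ⟨j, ⟨hIj, hjwI, hjw⟩, hmin⟩ := Int.exists_least_of_bdd
    (P := fun j ↦ I < j ∧ j ≤ w I ∧ w j ≠ j) ⟨I, fun _ h ↦ h.1.le⟩
    ⟨w I, hIw, le_rfl, fun h ↦ hIw.ne' (w.injective h)⟩
  have hwj : w j < j := lt_of_le_of_ne (hle j hIj (by omega)) hjw
  by_cases hj : j = I + 1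
  · subst hj
    exact ⟨I, hI1, by omega, hIw, by omega⟩
  have hwj1 : w (j - 1) = j - 1 := by
    by_contra h
    have := hmin (j - 1) ⟨by omega, by omega, h⟩
    omega
  have hwj2 : w j ≠ j - 1 := fun h ↦ by
    have := w.injective (h.trans hwj1.symm)
    omega
  exact absurd ⟨I, j - 1, j, by rw [Unfrozen, abs_le]; omega, by rw [Unfrozen, abs_le]; omega,
    by rw [Unfrozen, abs_le]; omega, by omega, by omega, by omega, by omega⟩ hav

lemma exists_descent (hw : IsSignedPerm n w) (hav : ¬ GloballyContains321 n w) (hne : w ≠ 1) :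
    ∃ i : ℕ, i + 1 ≤ n ∧ w (i + 1) < w i ∧ disB n (w * sB i) = disB n w - 2 := by
  have hn : 1 ≤ n := by
    by_contra! hn
    exact hne (hw.eq_one fun p hp1 hpn ↦ by omega)
  have hw1 : w 1 ≠ 0 := fun h ↦ one_ne_zero (w.injective (h.trans hw.apply_zero.symm))
  rcases hw1.lt_or_gt with hw1 | hw1
  · refine ⟨0, hn, by simpa [hw.apply_zero] using hw1, ?_⟩
    rw [disB_mul_sB_zero hw hn, abs_eq_max_neg, abs_eq_max_neg]
    omega
  · obtain ⟨i, hi1, hin, hiw, hiw1⟩ :=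
      exists_descent_of_lt_apply_self hw hav (exists_lt_apply_self hw hav hw1 hne)
    lift i to ℕ using by omega
    refine ⟨i, by omega, by omega, ?_⟩
    rw [disB_mul_sB (by omega) (by omega), abs_eq_max_neg, abs_eq_max_neg, abs_eq_max_neg,
      abs_eq_max_neg]
    omega

end Descent

theorem exists_isWordB_two_mul_length_eq_disB {n : ℕ} {w : Equiv.Perm ℤ} (hw : IsSignedPerm n w)
    (hav : ¬ GloballyContains321 n w) : ∃ l, IsWordB n w l ∧ 2 * (l.length : ℤ) = disB n w := by
  rcases eq_or_ne w 1 with rfl | hne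
  · exact ⟨[], ⟨by simp, rfl⟩, by simp⟩
  obtain ⟨i, hi, hdesc, hdis⟩ := exists_descent hw hav hne
  obtain ⟨l, ⟨hl, hprod⟩, hlen⟩ := exists_isWordB_two_mul_length_eq_disB
    (hw.mul (isSignedPerm_sB hi)) (not_globallyContains321_mul_sB hw hi hdesc hav)
  refine ⟨l ++ [i], ⟨?_, ?_⟩, ?_⟩
  · simp only [List.mem_append, List.mem_singleton]
    rintro j (hj | rfl)
    exacts [hl j hj, hi]
  · rw [List.map_append, List.prod_append, hprod, List.map_singleton, List.prod_singleton,
      mul_assoc, sB_mul_self, mul_one]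
  · rw [List.length_append, List.length_singleton]
    push_cast
    linarith
termination_by (disB n w).toNat
decreasing_by
  have := disB_nonneg (n := n) (w := w * sB i)
  omega

theorem stmt_13_general (n : ℕ) (w : Equiv.Perm ℤ) (hw : IsSignedPerm n w)
    (havoid : ¬ GloballyContains321 n w) :
    disB n w = 2 * (lenB n w : ℤ) := by
  obtain ⟨l, hl, hlen⟩ := exists_isWordB_two_mul_length_eq_disB hw havoid
  refine le_antisymm (disB_le_two_mul_lenB hl) ?_
  rw [← hlen]
  exact_mod_cast Nat.mul_le_mul_left 2 (lenB_le_length hl)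

theorem stmt_13 (n : ℕ) (hn : 1 ≤ n) (w : Equiv.Perm ℤ) (hw : IsSignedPerm n w)
    (havoid : ¬ GloballyContains321 n w) :
    disB n w = 2 * (lenB n w : ℤ) :=
  stmt_13_general n w hw havoid

end Stmt13
end

section
/- Let n ≥ 3 and let w be an element of the affine symmetric group 𝑆̃_n. If w globally avoids the pattern 321 (no integers i < j < k with w(i) > w(j) > w(k)), then dis(w)/2 = ℓ(w). -/
/-!
Right multiplication by a generator `sᵢ` swaps the values of `w` at each pair of positions
`r ≡ i` and `r + 1`, so it changes the disarray by at most `2`; hence `dis(w) ≤ 2ℓ(w)` always.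
Conversely, if `w ≠ 1` avoids `321`, pick `p < w(p)` (displacements sum to `0`) and some
`q > p` with `w(q) ≤ p` (otherwise the `n` distinct values `w(p), …, w(p+n-1)` would all exceed
`p`, yet they have the same sum as `p, …, p+n-1`). The last `r ∈ [p, q)` with `r < w(r)` then
satisfies `w(r+1) ≤ r`, since `w(r+1) = r+1` would make `r, r+1, q` a `321` pattern. At such a
crossing descent, multiplying by `s_{r mod n}` lowers the disarray by exactly `2` and keeps `w`
affine and `321`-avoiding, so induction on the disarray produces a word of length `dis(w)/2`.
-/

namespace Stmt14

/-- `w` is an element of the affine symmetric group `𝑆̃_n`: a bijection of `ℤ`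
with `w(i + n) = w(i) + n` for all `i` and `∑_{i=1}^n (w(i) - i) = 0`. -/
def IsAffinePerm (n : ℕ) (w : Equiv.Perm ℤ) : Prop :=
  (∀ i : ℤ, w (i + (n : ℤ)) = w i + (n : ℤ)) ∧
    ∑ i ∈ Finset.Icc (1 : ℤ) (n : ℤ), (w i - i) = 0

/-- `σ` is the Coxeter generator `sᵢ` of `𝑆̃_n`: it swaps `j` and `j + 1` for
every integer `j ≡ i (mod n)` and fixes all other integers. -/
def IsGenA (n : ℕ) (i : ℕ) (σ : Equiv.Perm ℤ) : Prop :=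
  ∀ j : ℤ, (j ≡ (i : ℤ) [ZMOD (n : ℤ)] → σ j = j + 1 ∧ σ (j + 1) = j) ∧
    ((¬ j ≡ (i : ℤ) [ZMOD (n : ℤ)] ∧ ¬ j ≡ (i : ℤ) + 1 [ZMOD (n : ℤ)]) → σ j = j)

/-- `l` is a word for `w` in the letters `{0, …, n-1}`:
`w = s_{i₁} ⋯ s_{i_ℓ}` where `l = [i₁, …, i_ℓ]`. -/
def IsWordA (n : ℕ) (w : Equiv.Perm ℤ) (l : List ℕ) : Prop :=
  (∀ i ∈ l, i < n) ∧
    ∃ σs : List (Equiv.Perm ℤ), List.Forall₂ (IsGenA n) l σs ∧ σs.prod = w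

/-- The Coxeter length of `w`: the minimal length of a word for `w`. -/
noncomputable def lenA (n : ℕ) (w : Equiv.Perm ℤ) : ℕ :=
  sInf {m | ∃ l : List ℕ, IsWordA n w l ∧ l.length = m}

/-- The disarray `dis(w) = ∑_{i=1}^n |w(i) - i|`. -/
noncomputable def disA (n : ℕ) (w : Equiv.Perm ℤ) : ℤ :=
  ∑ i ∈ Finset.Icc (1 : ℤ) (n : ℤ), |w i - i|

open Finset Function

theorem _root_.Function.Periodic.sum_Ico_add_eq {M : Type*} [AddCommMonoid M] {g : ℤ → M}
    {c : ℤ} (hg : Periodic g c) (hc : 0 ≤ c) (a : ℤ) :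
    ∑ x ∈ Ico a (a + c), g x = ∑ x ∈ Ico 0 c, g x := by
  have hinj : Set.InjOn (· % c) (Ico a (a + c) : Set ℤ) := by
    apply injOn_of_card_image_eq
    rw [Int.image_Ico_emod a c hc, Int.card_Ico, Int.card_Ico, add_sub_cancel_left, sub_zero]
  rw [← Int.image_Ico_emod a c hc, sum_image hinj]
  refine sum_congr rfl fun x _ => ?_
  rw [Int.emod_def, mul_comm, ← smul_eq_mul, hg.sub_zsmul_eq]

theorem sum_Ico_eq_add_add_sum {M : Type*} [AddCommMonoid M] (f : ℤ → M) {a b : ℤ}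
    (h : a + 2 ≤ b) : ∑ x ∈ Ico a b, f x = f a + f (a + 1) + ∑ x ∈ Ico (a + 2) b, f x := by
  rw [← insert_Ico_add_one_left_eq_Ico (by omega : a < b),
    ← insert_Ico_add_one_left_eq_Ico (by omega : a + 1 < b), add_assoc a 1 1, one_add_one_eq_two,
    sum_insert (by simp), sum_insert (by simp), add_assoc]

section Shift

variable {u : Equiv.Perm ℤ} {c : ℤ}

theorem commute_addRight_iff : Commute u (Equiv.addRight c) ↔ ∀ x, u (x + c) = u x + c :=
  ⟨fun h x => DFunLike.congr_fun h.eq x, fun h => Equiv.ext h⟩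

theorem apply_add_mul_of_commute (hu : Commute u (Equiv.addRight c)) (x t : ℤ) :
    u (x + c * t) = u x + c * t := by
  have := hu.zpow_right t
  rw [Equiv.zsmul_addRight, smul_eq_mul, mul_comm] at this
  exact commute_addRight_iff.1 this x

theorem periodic_apply_sub_of_commute (hu : Commute u (Equiv.addRight c)) :
    Periodic (fun x => u x - x) c := fun x => by
  simp only [commute_addRight_iff.1 hu x]
  ring

end Shift

theorem not_add_one_modEq_self {n : ℕ} (hn : 2 ≤ n) (a : ℤ) : ¬ a + 1 ≡ a [ZMOD n] := by
  rw [Int.add_modEq_left_iff]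
  intro h
  have := Int.le_of_dvd one_pos h
  omega

namespace IsGenA

variable {n i : ℕ} {σ : Equiv.Perm ℤ} {r x : ℤ}

theorem apply_of_modEq (hσ : IsGenA n i σ) (hx : x ≡ i [ZMOD n]) : σ x = x + 1 :=
  ((hσ x).1 hx).1

theorem apply_add_one_of_modEq (hσ : IsGenA n i σ) (hx : x ≡ i [ZMOD n]) : σ (x + 1) = x :=
  ((hσ x).1 hx).2

theorem apply_of_modEq_add_one (hσ : IsGenA n i σ) (hx : x ≡ i + 1 [ZMOD n]) : σ x = x - 1 := by
  have hx' : x - 1 ≡ i [ZMOD n] := by simpa using hx.sub_right 1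
  simpa using hσ.apply_add_one_of_modEq hx'

theorem apply_of_not_modEq (hσ : IsGenA n i σ) (h₁ : ¬ x ≡ i [ZMOD n])
    (h₂ : ¬ x ≡ i + 1 [ZMOD n]) : σ x = x :=
  (hσ x).2 ⟨h₁, h₂⟩

theorem commute_addRight (hσ : IsGenA n i σ) : Commute σ (Equiv.addRight (n : ℤ)) := by
  refine commute_addRight_iff.2 fun x => ?_
  by_cases h₁ : x ≡ i [ZMOD n]
  · rw [hσ.apply_of_modEq h₁, hσ.apply_of_modEq (Int.add_modulus_modEq_iff.2 h₁)]
    ring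
  by_cases h₂ : x ≡ i + 1 [ZMOD n]
  · rw [hσ.apply_of_modEq_add_one h₂,
      hσ.apply_of_modEq_add_one (Int.add_modulus_modEq_iff.2 h₂)]
    ring
  rw [hσ.apply_of_not_modEq h₁ h₂, hσ.apply_of_not_modEq (mt Int.add_modulus_modEq_iff.1 h₁)
    (mt Int.add_modulus_modEq_iff.1 h₂)]

theorem mul_self (hσ : IsGenA n i σ) : σ * σ = 1 := by
  ext x
  simp only [Equiv.Perm.mul_apply, Equiv.Perm.one_apply]
  by_cases h₁ : x ≡ i [ZMOD n]
  · rw [hσ.apply_of_modEq h₁, hσ.apply_add_one_of_modEq h₁]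
  by_cases h₂ : x ≡ i + 1 [ZMOD n]
  · have h₂' : x - 1 ≡ i [ZMOD n] := by simpa using h₂.sub_right 1
    rw [hσ.apply_of_modEq_add_one h₂, hσ.apply_of_modEq h₂']
    ring
  rw [hσ.apply_of_not_modEq h₁ h₂, hσ.apply_of_not_modEq h₁ h₂]

theorem abs_apply_sub_le (hσ : IsGenA n i σ) (x : ℤ) : |σ x - x| ≤ 1 := by
  by_cases h₁ : x ≡ i [ZMOD n]
  · simp [hσ.apply_of_modEq h₁]
  by_cases h₂ : x ≡ i + 1 [ZMOD n]
  · simp [hσ.apply_of_modEq_add_one h₂]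
  simp [hσ.apply_of_not_modEq h₁ h₂]

theorem modEq_of_apply_eq_add_one (hσ : IsGenA n i σ) (hx : σ x = x + 1) : x ≡ i [ZMOD n] := by
  by_contra h₁
  by_cases h₂ : x ≡ i + 1 [ZMOD n]
  · rw [hσ.apply_of_modEq_add_one h₂] at hx
    omega
  · rw [hσ.apply_of_not_modEq h₁ h₂] at hx
    omega

theorem apply_of_mem_Ico (hσ : IsGenA n i σ) (hr : r ≡ i [ZMOD n])
    (hx : x ∈ Ico (r + 2) (r + n)) : σ x = x := by
  rw [mem_Ico] at hx
  have not_modEq : ∀ s, s + 2 ≤ x + 1 → x < s + n → ¬ x ≡ s [ZMOD n] := fun s h₁ h₂ h =>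
    absurd (Int.eq_zero_of_dvd_of_nonneg_of_lt (by omega) (by omega) (Int.ModEq.dvd h.symm))
      (by omega)
  exact hσ.apply_of_not_modEq (fun h => not_modEq r (by omega) hx.2 (h.trans hr.symm))
    fun h => not_modEq (r + 1) (by omega) (by omega) (h.trans (hr.add_right 1).symm)

end IsGenA

theorem exists_isGenA {n : ℕ} (hn : 2 ≤ n) (i : ℕ) : ∃ σ, IsGenA n i σ := by
  let f : ℤ → ℤ := fun x =>
    if x ≡ i [ZMOD n] then x + 1 else if x ≡ i + 1 [ZMOD n] then x - 1 else x
  have f_add_one : ∀ x, x ≡ i [ZMOD n] → f (x + 1) = x := fun x hx => by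
    have h₁ : ¬ x + 1 ≡ i [ZMOD n] := fun h => not_add_one_modEq_self hn x (h.trans hx.symm)
    simp [f, h₁, hx.add_right 1]
  have hf : Involutive f := fun x => by
    by_cases h₁ : x ≡ i [ZMOD n]
    · simp only [f, if_pos h₁]
      exact f_add_one x h₁
    by_cases h₂ : x ≡ i + 1 [ZMOD n]
    · have h₂' : x - 1 ≡ i [ZMOD n] := by simpa using h₂.sub_right 1
      simp [f, h₁, h₂, h₂']
    simp [f, h₁, h₂]
  refine ⟨hf.toPerm, fun x => ⟨fun hx => ⟨by simp [f, hx], f_add_one x hx⟩, fun ⟨h₁, h₂⟩ => ?_⟩⟩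
  simp [f, h₁, h₂]

section Disarray

variable {n i : ℕ} {u w σ : Equiv.Perm ℤ} {r : ℤ}

theorem sum_Icc_one_eq_sum_Ico {M : Type*} [AddCommMonoid M] {g : ℤ → M} (hg : Periodic g n)
    (r : ℤ) : ∑ x ∈ Icc 1 (n : ℤ), g x = ∑ x ∈ Ico r (r + n), g x := by
  rw [← Ico_add_one_right_eq_Icc, add_comm, hg.sum_Ico_add_eq n.cast_nonneg,
    hg.sum_Ico_add_eq n.cast_nonneg]

theorem disA_eq_sum_Ico (hu : Commute u (Equiv.addRight (n : ℤ))) (r : ℤ) :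
    disA n u = ∑ x ∈ Ico r (r + n), |u x - x| :=
  sum_Icc_one_eq_sum_Ico ((periodic_apply_sub_of_commute hu).comp (|·|)) r

theorem sum_apply_sub_eq_sum_Ico (hu : Commute u (Equiv.addRight (n : ℤ))) (r : ℤ) :
    ∑ x ∈ Icc 1 (n : ℤ), (u x - x) = ∑ x ∈ Ico r (r + n), (u x - x) :=
  sum_Icc_one_eq_sum_Ico (periodic_apply_sub_of_commute hu) r

theorem disA_nonneg : 0 ≤ disA n u :=
  sum_nonneg fun _ _ => abs_nonneg _

@[simp]
theorem disA_one : disA n 1 = 0 := by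
  simp [disA]

theorem eq_one_of_disA_eq_zero (hn : 0 < n) (hu : Commute u (Equiv.addRight (n : ℤ)))
    (h : disA n u = 0) : u = 1 := by
  ext x
  rw [disA_eq_sum_Ico hu x, sum_eq_zero_iff_of_nonneg fun _ _ => abs_nonneg _] at h
  have := h x (by simp [hn])
  simp only [abs_eq_zero, sub_eq_zero] at this
  exact this

theorem IsGenA.sum_Ico_comp_eq (hn : 2 ≤ n) (hσ : IsGenA n i σ) (hr : r ≡ i [ZMOD n])
    (F : ℤ → ℤ → ℤ) :
    ∑ x ∈ Ico r (r + n), F (σ x) x = ∑ x ∈ Ico r (r + n), F x x +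
      (F (r + 1) r + F r (r + 1) - F r r - F (r + 1) (r + 1)) := by
  have hrn : r + 2 ≤ r + n := by omega
  rw [sum_Ico_eq_add_add_sum _ hrn, sum_Ico_eq_add_add_sum _ hrn, hσ.apply_of_modEq hr,
    hσ.apply_add_one_of_modEq hr,
    sum_congr rfl fun x hx => by rw [hσ.apply_of_mem_Ico hr hx]]
  ring

theorem disA_mul_isGenA_le (hn : 2 ≤ n) (hu : Commute u (Equiv.addRight (n : ℤ)))
    (hσ : IsGenA n i σ) : disA n (u * σ) ≤ disA n u + 2 := by
  rw [disA_eq_sum_Ico (hu.mul_left hσ.commute_addRight) i, disA_eq_sum_Ico hu i]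
  have h := hσ.sum_Ico_comp_eq hn (Int.ModEq.refl _) fun a x => |u a - x|
  simp only [Equiv.Perm.mul_apply] at h ⊢
  have h₁ := abs_sub_le (u (i + 1)) (i + 1) i
  have h₂ := abs_sub_le (u i) i (i + 1)
  simp only [add_sub_cancel_left, sub_add_cancel_left, abs_one, abs_neg] at h₁ h₂
  omega

theorem disA_mul_isGenA_of_crossing (hn : 2 ≤ n) (hu : Commute u (Equiv.addRight (n : ℤ)))
    (hσ : IsGenA n i σ) (hr : r ≡ i [ZMOD n]) (hr₁ : r < u r) (hr₂ : u (r + 1) ≤ r) :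
    disA n (u * σ) = disA n u - 2 := by
  rw [disA_eq_sum_Ico (hu.mul_left hσ.commute_addRight) r, disA_eq_sum_Ico hu r]
  have h := hσ.sum_Ico_comp_eq hn hr fun a x => |u a - x|
  simp only [Equiv.Perm.mul_apply] at h ⊢
  rw [h, abs_of_nonpos (a := u (r + 1) - r) (by omega),
    abs_of_nonneg (a := u r - (r + 1)) (by omega), abs_of_nonneg (a := u r - r) (by omega),
    abs_of_nonpos (a := u (r + 1) - (r + 1)) (by omega)]
  ring

theorem IsAffinePerm.commute_addRight (hw : IsAffinePerm n w) :
    Commute w (Equiv.addRight (n : ℤ)) :=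
  commute_addRight_iff.2 hw.1

theorem IsAffinePerm.mul_isGenA (hn : 2 ≤ n) (hw : IsAffinePerm n w) (hσ : IsGenA n i σ) :
    IsAffinePerm n (w * σ) := by
  have hwσ := hw.commute_addRight.mul_left hσ.commute_addRight
  refine ⟨commute_addRight_iff.1 hwσ, ?_⟩
  rw [sum_apply_sub_eq_sum_Ico hwσ i, ← hw.2, sum_apply_sub_eq_sum_Ico hw.commute_addRight i]
  have h := hσ.sum_Ico_comp_eq hn (Int.ModEq.refl _) fun a x => w a - x
  simp only [Equiv.Perm.mul_apply] at h ⊢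
  rw [h]
  ring

theorem disA_mul_prod_le (hn : 2 ≤ n) {l : List ℕ} {σs : List (Equiv.Perm ℤ)}
    (hσs : List.Forall₂ (IsGenA n) l σs) (hu : Commute u (Equiv.addRight (n : ℤ))) :
    disA n (u * σs.prod) ≤ disA n u + 2 * σs.length := by
  induction hσs generalizing u with
  | nil => simp
  | @cons i σ l σs hσ _ ih =>
    rw [List.prod_cons, ← mul_assoc, List.length_cons]
    have := ih (hu.mul_left hσ.commute_addRight)
    have := disA_mul_isGenA_le hn hu hσ
    push_cast
    omega

theorem disA_le_of_isWordA (hn : 2 ≤ n) {l : List ℕ} (hl : IsWordA n w l) :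
    disA n w ≤ 2 * l.length := by
  obtain ⟨-, σs, hσs, rfl⟩ := hl
  simpa [hσs.length_eq] using disA_mul_prod_le hn hσs (Commute.one_left _)

end Disarray

def Avoids321 (w : Equiv.Perm ℤ) : Prop :=
  ¬ ∃ i j k : ℤ, i < j ∧ j < k ∧ w i > w j ∧ w j > w k

theorem Avoids321.mul {w σ : Equiv.Perm ℤ} (hw : Avoids321 w) (hσ : ∀ x, |σ x - x| ≤ 1)
    (hdesc : ∀ x, σ x = x + 1 → w (x + 1) < w x) : Avoids321 (w * σ) := by
  have σ_lt_of_inversion : ∀ a b, a < b → w (σ a) > w (σ b) → σ a < σ b := by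
    intro a b hab hw_ab
    by_contra hba
    have ha := abs_le.1 (hσ a)
    have hb := abs_le.1 (hσ b)
    have hne : σ a ≠ σ b := fun h => hab.ne (σ.injective h)
    obtain ⟨hσa, hσb⟩ : σ a = a + 1 ∧ σ b = a := by omega
    have := hdesc a hσa
    rw [hσa, hσb] at hw_ab
    omega
  rintro ⟨a, b, c, hab, hbc, h₁, h₂⟩
  exact hw ⟨σ a, σ b, σ c, σ_lt_of_inversion a b hab h₁, σ_lt_of_inversion b c hbc h₂,
    h₁, h₂⟩

section Crossing

variable {n : ℕ} {w : Equiv.Perm ℤ}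

theorem exists_lt_apply (hw : IsAffinePerm n w) (hd : disA n w ≠ 0) : ∃ p, p < w p := by
  by_contra! h
  apply hd
  calc disA n w = -∑ x ∈ Icc 1 (n : ℤ), (w x - x) := by
        rw [disA, ← sum_neg_distrib]
        exact sum_congr rfl fun x _ => abs_of_nonpos (by linarith [h x])
    _ = 0 := by rw [hw.2, neg_zero]

theorem exists_lt_and_apply_le_of_lt_apply (hn : 0 < n) (hw : IsAffinePerm n w) {p : ℤ}
    (hp : p < w p) : ∃ q, p < q ∧ w q ≤ p := by
  by_contra! h
  have hsum : ∑ x ∈ Ico p (p + n), w x = ∑ x ∈ Ico p (p + n), x := by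
    rw [← sub_eq_zero, ← sum_sub_distrib, ← sum_apply_sub_eq_sum_Ico hw.commute_addRight, hw.2]
  have hcard : #((Ico p (p + n)).image w) = n := by
    rw [card_image_of_injective _ w.injective, Int.card_Ico, add_sub_cancel_left, Int.toNat_natCast]
  have hlb : ∀ y ∈ (Ico p (p + n)).image w, p + 1 ≤ y := by
    simp only [mem_image, mem_Ico, forall_exists_index, and_imp]
    rintro _ x hpx - rfl
    rcases hpx.eq_or_lt with rfl | hpx
    · exact hp
    · exact h x hpx
  have := sum_Ico_le_sum hlb
  rw [hcard, sum_image w.injective.injOn, hsum, add_right_comm,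
    ← sum_Ico_add' (fun x : ℤ => x) p (p + n) 1, sum_add_distrib, sum_const, Int.card_Ico,
    add_sub_cancel_left, Int.toNat_natCast, nsmul_eq_mul, mul_one] at this
  omega

theorem exists_crossing (hn : 0 < n) (hw : IsAffinePerm n w) (havoid : Avoids321 w)
    (hd : disA n w ≠ 0) : ∃ r, r < w r ∧ w (r + 1) ≤ r := by
  obtain ⟨p, hp⟩ := exists_lt_apply hw hd
  obtain ⟨q, hpq, hq⟩ := exists_lt_and_apply_le_of_lt_apply hn hw hp
  obtain ⟨r, ⟨hrq, hr⟩, hmax⟩ := Int.exists_greatest_of_bdd (P := fun r => r < q ∧ r < w r)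
    ⟨q, fun _ h => h.1.le⟩ ⟨p, hpq, hp⟩
  have hpr : p ≤ r := hmax p ⟨hpq, hp⟩
  refine ⟨r, hr, ?_⟩
  by_contra! hr₁
  rcases (show r + 1 ≤ q by omega).eq_or_lt with hrq₁ | hrq₁
  · rw [hrq₁] at hr₁
    omega
  have hfix : w (r + 1) = r + 1 := by
    by_contra hne
    have := hmax (r + 1) ⟨hrq₁, by omega⟩
    omega
  have hne : w r ≠ r + 1 := fun h => by simpa using w.injective (h.trans hfix.symm)
  exact havoid ⟨r, r + 1, q, by omega, hrq₁, by omega, by omega⟩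

end Crossing

section Word

variable {n : ℕ} {w : Equiv.Perm ℤ}

theorem exists_modEq_lt (hn : 0 < n) (r : ℤ) : ∃ i < n, r ≡ i [ZMOD n] := by
  have hr₀ : 0 ≤ r % n := Int.emod_nonneg r (by omega)
  have hrn : r % n < n := Int.emod_lt_of_pos r (by omega)
  refine ⟨(r % n).toNat, by omega, ?_⟩
  rw [Int.toNat_of_nonneg hr₀]
  exact (Int.mod_modEq r n).symm

theorem exists_isGenA_disA_mul_eq (hn : 2 ≤ n) (hw : IsAffinePerm n w) (havoid : Avoids321 w)
    (hd : disA n w ≠ 0) : ∃ i < n, ∃ σ, IsGenA n i σ ∧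
      disA n (w * σ) = disA n w - 2 ∧ Avoids321 (w * σ) := by
  obtain ⟨r, hr₁, hr₂⟩ := exists_crossing (by omega) hw havoid hd
  obtain ⟨i, hi, hri⟩ := exists_modEq_lt (n := n) (by omega) r
  obtain ⟨σ, hσ⟩ := exists_isGenA hn i
  refine ⟨i, hi, σ, hσ, disA_mul_isGenA_of_crossing hn hw.commute_addRight hσ hri hr₁ hr₂,
    havoid.mul hσ.abs_apply_sub_le fun x hx => ?_⟩
  obtain ⟨t, rfl⟩ := Int.modEq_iff_add_fac.1 (hri.trans (hσ.modEq_of_apply_eq_add_one hx).symm)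
  rw [add_right_comm, apply_add_mul_of_commute hw.commute_addRight,
    apply_add_mul_of_commute hw.commute_addRight]
  omega

theorem exists_isWordA_of_avoids321 (hn : 2 ≤ n) (hw : IsAffinePerm n w)
    (havoid : Avoids321 w) : ∃ l, IsWordA n w l ∧ disA n w = 2 * l.length := by
  induction hd : (disA n w).toNat using Nat.strong_induction_on generalizing w with
  | _ d ih =>
  by_cases h0 : disA n w = 0
  · rw [eq_one_of_disA_eq_zero (by omega) hw.commute_addRight h0]
    exact ⟨[], ⟨by simp, [], .nil, rfl⟩, by simp⟩
  obtain ⟨i, hi, σ, hσ, hdis, havoid'⟩ := exists_isGenA_disA_mul_eq hn hw havoid h0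
  obtain ⟨l, ⟨hl, σs, hσs, hprod⟩, hlen⟩ :=
    ih _ (by have := disA_nonneg (n := n) (u := w * σ); omega) (hw.mul_isGenA hn hσ) havoid' rfl
  refine ⟨l ++ [i], ⟨?_, σs ++ [σ], List.rel_append hσs (.cons hσ .nil), ?_⟩, ?_⟩
  · simpa [or_imp, forall_and] using ⟨hl, hi⟩
  · rw [List.prod_append, hprod, List.prod_singleton, mul_assoc, hσ.mul_self, mul_one]
  · rw [List.length_append, List.length_singleton]
    push_cast
    omega

theorem disA_eq_two_mul_lenA_of_isWordA (hn : 2 ≤ n) {l : List ℕ} (hl : IsWordA n w l)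
    (h : disA n w = 2 * l.length) : disA n w = 2 * lenA n w := by
  obtain ⟨l', hl', hlen⟩ : lenA n w ∈ {m | ∃ l, IsWordA n w l ∧ l.length = m} :=
    Nat.sInf_mem ⟨_, l, hl, rfl⟩
  have hle : lenA n w ≤ l.length := Nat.sInf_le ⟨l, hl, rfl⟩
  have hge := disA_le_of_isWordA hn hl'
  rw [hlen] at hge
  omega

end Word

theorem stmt_14 (n : ℕ) (hn : 3 ≤ n) (w : Equiv.Perm ℤ) (hw : IsAffinePerm n w)
    (havoid : ¬ ∃ i j k : ℤ, i < j ∧ j < k ∧ w i > w j ∧ w j > w k) :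
    disA n w = 2 * (lenA n w : ℤ) := by
  obtain ⟨l, hl, hdis⟩ := exists_isWordA_of_avoids321 (by omega) hw havoid
  exact disA_eq_two_mul_lenA_of_isWordA (by omega) hl hdis

end Stmt14
end

section
/- Let n ≥ 1 and let w ∈ S^B_n be a signed permutation. Then w globally contains the pattern 321 (there exist unfrozen integers i < j < k with w(i) > w(j) > w(k)) if and only if w classically contains at least one of the six patterns 1 −2, −1 −2, 3 2 1, 3 2 −1, −3 2 1, −3 2 −1. -/
namespace Stmt15

/-- The Coxeter generator `sᵢ` of the hyperoctahedral group, acting on `ℤ`: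
`s₀` swaps `-1` and `1`; for `i ≥ 1`, `sᵢ` swaps `i` with `i+1` and `-i` with `-(i+1)`. -/
def sB (i : ℕ) : Equiv.Perm ℤ :=
  if i = 0 then Equiv.swap (-1 : ℤ) 1
  else Equiv.swap (i : ℤ) ((i : ℤ) + 1) * Equiv.swap (-(i : ℤ)) (-((i : ℤ) + 1))

/-- `w` is a signed permutation in `S^B_n`: a bijection of `ℤ` with
`w(-i) = -w(i)` for all `i` and `w(i) = i` whenever `|i| > n`. -/
def IsSignedPerm (n : ℕ) (w : Equiv.Perm ℤ) : Prop :=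
  (∀ i : ℤ, w (-i) = -(w i)) ∧ ∀ i : ℤ, (n : ℤ) < |i| → w i = i

/-- `l` is a word for `w` in the letters `{0, …, n-1}`. -/
def IsWordB (n : ℕ) (w : Equiv.Perm ℤ) (l : List ℕ) : Prop :=
  (∀ i ∈ l, i + 1 ≤ n) ∧ (l.map sB).prod = w

/-- The Coxeter length of `w`: the minimal length of a word for `w`. -/
noncomputable def lenB (n : ℕ) (w : Equiv.Perm ℤ) : ℕ :=
  sInf {m | ∃ l : List ℕ, IsWordB n w l ∧ l.length = m}

/-- The disarray `dis(w) = ∑_{i=1}^n |w(i) - i|`. -/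
noncomputable def disB (n : ℕ) (w : Equiv.Perm ℤ) : ℤ :=
  ∑ i ∈ Finset.Icc (1 : ℤ) (n : ℤ), |w i - i|

/-- The unfrozen integers for `S^B_n` are `{-n, …, -1, 1, …, n}`. -/
def Unfrozen (n : ℕ) (i : ℤ) : Prop := i ≠ 0 ∧ |i| ≤ (n : ℤ)

/-- `w` globally contains the pattern `321`: there are unfrozen integers
`i < j < k` with `w(i) > w(j) > w(k)`. -/
def GloballyContains321 (n : ℕ) (w : Equiv.Perm ℤ) : Prop :=
  ∃ i j k : ℤ, Unfrozen n i ∧ Unfrozen n j ∧ Unfrozen n k ∧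
    i < j ∧ j < k ∧ w i > w j ∧ w j > w k

/-- `w` classically contains the pattern `p` (given by its window values
`p(1) ⋯ p(k)`, a list of nonzero integers): there are positions
`1 ≤ i₁ < ⋯ < i_k ≤ n` such that `|w(i₁)|, …, |w(i_k)|` is order-isomorphic to
`|p(1)|, …, |p(k)|` and `w(i_j) · p(j) > 0` for all `j`. -/
def ClassicallyContains (n : ℕ) (w : Equiv.Perm ℤ) (p : List ℤ) : Prop :=
  ∃ f : Fin p.length → ℤ, StrictMono f ∧ (∀ a, 1 ≤ f a ∧ f a ≤ (n : ℤ)) ∧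
    (∀ a b : Fin p.length, |w (f a)| < |w (f b)| ↔ |p.get a| < |p.get b|) ∧
    ∀ a : Fin p.length, 0 < w (f a) * p.get a


/-! Both sides are equivalent to the existence, in the window `1, …, n`, of one of two
configurations: a pair `i < j` with `|w i| < |w j|` and `w j < 0` (the patterns `±1 −2`), or a
triple `i < j < k` with `|w i| > |w j| > |w k|` and `w j > 0` (the patterns `±3 2 ±1`). Such a
pair gives the global occurrence `-j < i < j` of 321, and such a triple gives `±i < j < k`, with
the sign chosen so that `w (±i) = |w i|`. Conversely, since `w` commutes with negation, a global
occurrence `i < j < k` can be reflected to `-k < -j < -i`, so we may assume `j > 0`; the signs of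
`w j`, `w k` and `i` then determine which configuration appears. -/

lemma unfrozen_iff {n : ℕ} {i : ℤ} : Unfrozen n i ↔ i ≠ 0 ∧ -(n : ℤ) ≤ i ∧ i ≤ n := by
  rw [Unfrozen, abs_le]

lemma unfrozen_of_one_le {n : ℕ} {i : ℤ} (h₁ : 1 ≤ i) (hn : i ≤ n) : Unfrozen n i :=
  unfrozen_iff.2 ⟨by omega, by omega, hn⟩

lemma Unfrozen.neg {n : ℕ} {i : ℤ} (h : Unfrozen n i) : Unfrozen n (-i) :=
  ⟨neg_ne_zero.2 h.1, (abs_neg i).trans_le h.2⟩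

namespace IsSignedPerm

variable {n : ℕ} {w : Equiv.Perm ℤ}

lemma map_ne_zero (hw : IsSignedPerm n w) {i : ℤ} (hi : i ≠ 0) : w i ≠ 0 := by
  intro h
  have : w (-i) = w i := by rw [hw.1 i, h, neg_zero]
  exact hi (by linarith [w.injective this])

lemma eq_of_abs_eq (hw : IsSignedPerm n w) {a b : ℤ} (ha : 0 < a) (hb : 0 < b)
    (h : |w a| = |w b|) : a = b := by
  rcases abs_eq_abs.1 h with h | h
  · exact w.injective h
  · rw [← hw.1 b] at h
    linarith [w.injective h]

end IsSignedPerm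

def HasAbsAscentToNeg (n : ℕ) (w : Equiv.Perm ℤ) : Prop :=
  ∃ i j : ℤ, 1 ≤ i ∧ i < j ∧ j ≤ n ∧ |w i| < |w j| ∧ w j < 0

def HasAbsDescentPosMiddle (n : ℕ) (w : Equiv.Perm ℤ) : Prop :=
  ∃ i j k : ℤ, 1 ≤ i ∧ i < j ∧ j < k ∧ k ≤ n ∧ |w k| < |w j| ∧ |w j| < |w i| ∧ 0 < w j

section

variable {n : ℕ} {w : Equiv.Perm ℤ}

lemma classicallyContains_pair_iff {p₁ p₂ : ℤ} (hp : |p₁| < |p₂|) :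
    ClassicallyContains n w [p₁, p₂] ↔ ∃ i j : ℤ, 1 ≤ i ∧ i < j ∧ j ≤ n ∧
      |w i| < |w j| ∧ 0 < w i * p₁ ∧ 0 < w j * p₂ := by
  constructor
  · rintro ⟨f, hf, hbd, hiso, hsgn⟩
    exact ⟨f 0, f 1, (hbd 0).1, hf Fin.zero_lt_one, (hbd 1).2, (hiso 0 1).2 hp, hsgn 0, hsgn 1⟩
  · rintro ⟨i, j, hi, hij, hj, habs, hs₁, hs₂⟩
    refine ⟨![i, j], (Subsingleton.strictMono ![j]).vecCons hij, ?_, ?_, ?_⟩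
    · intro a
      fin_cases a <;> simp <;> omega
    · intro a b
      fin_cases a <;> fin_cases b <;> simp [habs, hp, habs.le.not_gt, hp.le.not_gt]
    · intro a
      fin_cases a <;> simpa

lemma classicallyContains_triple_iff {p₁ p₂ p₃ : ℤ} (hp₁₂ : |p₂| < |p₁|) (hp₂₃ : |p₃| < |p₂|) :
    ClassicallyContains n w [p₁, p₂, p₃] ↔ ∃ i j k : ℤ, 1 ≤ i ∧ i < j ∧ j < k ∧ k ≤ n ∧
      |w k| < |w j| ∧ |w j| < |w i| ∧ 0 < w i * p₁ ∧ 0 < w j * p₂ ∧ 0 < w k * p₃ := by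
  constructor
  · rintro ⟨f, hf, hbd, hiso, hsgn⟩
    exact ⟨f 0, f 1, f 2, (hbd 0).1, hf (show (0 : Fin 3) < 1 by decide),
      hf (show (1 : Fin 3) < 2 by decide), (hbd 2).2, (hiso 2 1).2 hp₂₃, (hiso 1 0).2 hp₁₂,
      hsgn 0, hsgn 1, hsgn 2⟩
  · rintro ⟨i, j, k, hi, hij, hjk, hk, habs₂₃, habs₁₂, hs₁, hs₂, hs₃⟩
    have habs₁₃ := habs₂₃.trans habs₁₂
    have hp₁₃ := hp₂₃.trans hp₁₂
    refine ⟨![i, j, k], ((Subsingleton.strictMono ![k]).vecCons hjk).vecCons hij, ?_, ?_, ?_⟩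
    · intro a
      fin_cases a <;> simp <;> omega
    · intro a b
      fin_cases a <;> fin_cases b <;>
        simp [habs₁₂, habs₂₃, habs₁₃, hp₁₂, hp₂₃, hp₁₃, habs₁₂.le.not_gt, habs₂₃.le.not_gt,
          habs₁₃.le.not_gt, hp₁₂.le.not_gt, hp₂₃.le.not_gt, hp₁₃.le.not_gt]
    · intro a
      fin_cases a <;> simpa

lemma classicallyContains_pm1_neg2_iff (hw : IsSignedPerm n w) :
    ClassicallyContains n w [1, -2] ∨ ClassicallyContains n w [-1, -2] ↔
      HasAbsAscentToNeg n w := by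
  constructor
  · rintro (h | h) <;>
      obtain ⟨i, j, hi, hij, hj, habs, -, hs⟩ := (classicallyContains_pair_iff (by norm_num)).1 h <;>
      exact ⟨i, j, hi, hij, hj, habs, by linarith⟩
  · rintro ⟨i, j, hi, hij, hj, habs, hneg⟩
    rcases (hw.map_ne_zero (i := i) (by omega)).lt_or_gt with hwi | hwi
    · exact .inr ((classicallyContains_pair_iff (by norm_num)).2
        ⟨i, j, hi, hij, hj, habs, by linarith, by linarith⟩)
    · exact .inl ((classicallyContains_pair_iff (by norm_num)).2
        ⟨i, j, hi, hij, hj, habs, by linarith, by linarith⟩)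

lemma classicallyContains_pm3_2_pm1_iff (hw : IsSignedPerm n w) :
    ClassicallyContains n w [3, 2, 1] ∨ ClassicallyContains n w [3, 2, -1] ∨
      ClassicallyContains n w [-3, 2, 1] ∨ ClassicallyContains n w [-3, 2, -1] ↔
      HasAbsDescentPosMiddle n w := by
  constructor
  · rintro (h | h | h | h) <;>
      obtain ⟨i, j, k, hi, hij, hjk, hk, habs₂₃, habs₁₂, -, hs, -⟩ :=
        (classicallyContains_triple_iff (by norm_num) (by norm_num)).1 h <;>
      exact ⟨i, j, k, hi, hij, hjk, hk, habs₂₃, habs₁₂, by linarith⟩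
  · rintro ⟨i, j, k, hi, hij, hjk, hk, habs₂₃, habs₁₂, hwj⟩
    have contains {p₁ p₃ : ℤ} (hp₁ : |p₁| = 3) (hp₃ : |p₃| = 1) (hs₁ : 0 < w i * p₁)
        (hs₃ : 0 < w k * p₃) : ClassicallyContains n w [p₁, 2, p₃] :=
      (classicallyContains_triple_iff (by norm_num [hp₁]) (by norm_num [hp₃])).2
        ⟨i, j, k, hi, hij, hjk, hk, habs₂₃, habs₁₂, hs₁, by linarith, hs₃⟩
    rcases (hw.map_ne_zero (i := i) (by omega)).lt_or_gt with hwi | hwi <;>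
      rcases (hw.map_ne_zero (i := k) (by omega)).lt_or_gt with hwk | hwk
    · exact .inr (.inr (.inr (contains (by norm_num) (by norm_num) (by linarith) (by linarith))))
    · exact .inr (.inr (.inl (contains (by norm_num) (by norm_num) (by linarith) (by linarith))))
    · exact .inr (.inl (contains (by norm_num) (by norm_num) (by linarith) (by linarith)))
    · exact .inl (contains (by norm_num) (by norm_num) (by linarith) (by linarith))

lemma HasAbsAscentToNeg.globallyContains321 (hw : IsSignedPerm n w)
    (h : HasAbsAscentToNeg n w) : GloballyContains321 n w := by
  obtain ⟨i, j, hi, hij, hj, habs, hneg⟩ := h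
  rw [abs_of_neg hneg] at habs
  have huj := unfrozen_of_one_le (by omega) hj
  refine ⟨-j, i, j, huj.neg, unfrozen_of_one_le hi (by omega), huj, by omega, hij, ?_, ?_⟩
  · rw [hw.1 j]
    linarith [le_abs_self (w i)]
  · linarith [neg_abs_le (w i)]

lemma HasAbsDescentPosMiddle.globallyContains321 (hw : IsSignedPerm n w)
    (h : HasAbsDescentPosMiddle n w) : GloballyContains321 n w := by
  obtain ⟨i, j, k, hi, hij, hjk, hk, habs₂₃, habs₁₂, hwj⟩ := h
  rw [abs_of_pos hwj] at habs₁₂ habs₂₃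
  have hwk : w k < w j := (le_abs_self _).trans_lt habs₂₃
  have hui := unfrozen_of_one_le (n := n) hi (by omega)
  have huj := unfrozen_of_one_le (by omega) (by omega : j ≤ n)
  have huk := unfrozen_of_one_le (by omega) hk
  rcases le_or_gt 0 (w i) with hwi | hwi
  · rw [abs_of_nonneg hwi] at habs₁₂
    exact ⟨i, j, k, hui, huj, huk, hij, hjk, habs₁₂, hwk⟩
  · rw [abs_of_neg hwi, ← hw.1 i] at habs₁₂
    exact ⟨-i, j, k, hui.neg, huj, huk, by omega, hjk, habs₁₂, hwk⟩

lemma GloballyContains321.exists_pos_middle (hw : IsSignedPerm n w)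
    (h : GloballyContains321 n w) : ∃ i j k : ℤ, Unfrozen n i ∧ i < j ∧ j < k ∧ 0 < j ∧
      k ≤ n ∧ w j < w i ∧ w k < w j := by
  obtain ⟨i, j, k, hi, hj, hk, hij, hjk, hwij, hwjk⟩ := h
  have hkn := (le_abs_self k).trans hk.2
  have hin := (neg_le_abs i).trans hi.2
  rcases hj.1.lt_or_gt with hj0 | hj0
  · refine ⟨-k, -j, -i, hk.neg, by omega, by omega, by omega, by omega, ?_, ?_⟩ <;>
      simp only [hw.1] <;> omega
  · exact ⟨i, j, k, hi, hij, hjk, hj0, hkn, hwij, hwjk⟩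

lemma hasAbsAscentToNeg_or_hasAbsDescentPosMiddle (hw : IsSignedPerm n w) {i j k : ℤ}
    (hi : Unfrozen n i) (hij : i < j) (hjk : j < k) (hj : 0 < j) (hk : k ≤ n)
    (hwij : w j < w i) (hwjk : w k < w j) :
    HasAbsAscentToNeg n w ∨ HasAbsDescentPosMiddle n w := by
  rw [unfrozen_iff] at hi
  rcases (hw.map_ne_zero (i := j) (by omega)).lt_or_gt with hwj | hwj
  · left
    exact ⟨j, k, by omega, hjk, hk, by rw [abs_of_neg hwj, abs_of_neg (by omega)]; omega, by omega⟩
  by_cases hjk_abs : |w j| < |w k|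
  · left
    have hwk : w k < 0 := by
      by_contra! hwk
      rw [abs_of_pos hwj, abs_of_nonneg hwk] at hjk_abs
      omega
    exact ⟨j, k, by omega, hjk, hk, hjk_abs, hwk⟩
  have habs₂₃ : |w k| < |w j| :=
    (not_lt.1 hjk_abs).lt_of_ne fun h ↦ by have := hw.eq_of_abs_eq (by omega) hj h; omega
  rcases hi.1.lt_or_gt with hi0 | hi0
  · have hwi' : w (-i) = -w i := hw.1 i
    rcases lt_trichotomy (-i) j with hlt | heq | hgt
    · right
      refine ⟨-i, j, k, by omega, hlt, hjk, hk, habs₂₃, ?_, hwj⟩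
      rw [abs_of_pos hwj, abs_of_neg (by omega)]
      omega
    · rw [heq] at hwi'
      omega
    · left
      refine ⟨j, -i, by omega, hgt, by omega, ?_, by omega⟩
      rw [abs_of_pos hwj, abs_of_neg (by omega)]
      omega
  · right
    refine ⟨i, j, k, by omega, hij, hjk, hk, habs₂₃, ?_, hwj⟩
    rwa [abs_of_pos hwj, abs_of_pos (by omega)]

lemma globallyContains321_iff (hw : IsSignedPerm n w) :
    GloballyContains321 n w ↔ HasAbsAscentToNeg n w ∨ HasAbsDescentPosMiddle n w := by
  constructor
  · intro h
    obtain ⟨i, j, k, hi, hij, hjk, hj, hk, hwij, hwjk⟩ := h.exists_pos_middle hw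
    exact hasAbsAscentToNeg_or_hasAbsDescentPosMiddle hw hi hij hjk hj hk hwij hwjk
  · rintro (h | h)
    exacts [h.globallyContains321 hw, h.globallyContains321 hw]

end

theorem stmt_15_general (n : ℕ) (w : Equiv.Perm ℤ) (hw : IsSignedPerm n w) :
    GloballyContains321 n w ↔
      ClassicallyContains n w [1, -2] ∨ ClassicallyContains n w [-1, -2] ∨
      ClassicallyContains n w [3, 2, 1] ∨ ClassicallyContains n w [3, 2, -1] ∨
      ClassicallyContains n w [-3, 2, 1] ∨ ClassicallyContains n w [-3, 2, -1] := by
  rw [← or_assoc, classicallyContains_pm1_neg2_iff hw, classicallyContains_pm3_2_pm1_iff hw,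
    globallyContains321_iff hw]

theorem stmt_15 (n : ℕ) (hn : 1 ≤ n) (w : Equiv.Perm ℤ) (hw : IsSignedPerm n w) :
    GloballyContains321 n w ↔
      ClassicallyContains n w [1, -2] ∨ ClassicallyContains n w [-1, -2] ∨
      ClassicallyContains n w [3, 2, 1] ∨ ClassicallyContains n w [3, 2, -1] ∨
      ClassicallyContains n w [-3, 2, 1] ∨ ClassicallyContains n w [-3, 2, -1] :=
  stmt_15_general n w hw

end Stmt15
end

section
/- Every element w of the affine symmetric group 𝑆̃_2 globally avoids the pattern 321: there are no integers i < j < k with w(i) > w(j) > w(k). -/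
namespace Stmt16

/-- `w` is an element of the affine symmetric group `𝑆̃₂`: a bijection of `ℤ`
with `w(i + 2) = w(i) + 2` for all `i` and `(w(1) - 1) + (w(2) - 2) = 0`. -/
def IsAffinePerm2 (w : Equiv.Perm ℤ) : Prop :=
  (∀ i : ℤ, w (i + 2) = w i + 2) ∧ (w 1 - 1) + (w 2 - 2) = 0

theorem stmt_16 (w : Equiv.Perm ℤ) (hw : IsAffinePerm2 w) :
    ¬ ∃ i j k : ℤ, i < j ∧ j < k ∧ w i > w j ∧ w j > w k := by
  rintro ⟨i, j, k, hij, hjk, h1, h2⟩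
  obtain ⟨hper, -⟩ := hw
  have key : ∀ n : ℕ, ∀ a : ℤ, w (a + 2 * n) = w a + 2 * n := by
    intro n
    induction n with
    | zero => intro a; simp
    | succ n ih =>
      intro a
      have h1 := hper (a + 2 * n)
      have h2 := ih a
      have : a + 2 * ((n : ℤ) + 1) = (a + 2 * n) + 2 := by ring
      push_cast
      rw [this, h1, h2]
      ring
  have mono : ∀ a b : ℤ, a < b → (b - a) % 2 = 0 → w a < w b := by
    intro a b hab hpar
    obtain ⟨m, hm⟩ : ∃ m : ℤ, b - a = 2 * m := ⟨(b - a) / 2, by omega⟩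
    obtain ⟨n, hn⟩ : ∃ n : ℕ, m = (n : ℤ) := ⟨m.toNat, by omega⟩
    have hb : b = a + 2 * (n : ℤ) := by omega
    have := key n a
    rw [hb, this]
    omega
  have : (j - i) % 2 = 0 ∨ (k - j) % 2 = 0 ∨ (k - i) % 2 = 0 := by omega
  rcases this with h | h | h
  · exact absurd (mono i j hij h) (by omega)
  · exact absurd (mono j k hjk h) (by omega)
  · exact absurd (mono i k (hij.trans hjk) h) (by omega)

end Stmt16
end
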